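/- arXiv:math/0601615 — 4 statements merged into one kernel-verified Lean document; each statement's English description precedes it below -/
import Mathlib

section
/- Let A be an n×n zero-one matrix, and let A^↻#A denote the 2n×2n block matrix with A^↻ (A rotated 180 degrees) in the top-left block, A in the bottom-right block, and all-ones n×n matrices in the off-diagonal blocks. Then RB^{A^↻#A}(q,t) = Σ_{i=0}^{n} R_{n−i}^{A}(q²) · [i]!_{q²} · q^{−i²} · t^{i}. -/
open Finset

/-- A board: the set of one-entries (cells) of a zero-one matrix, as (row, column) pairs. -/
abbrev Board := Finset (ℕ × ℕ)

/-- The full `m × n` grid of cells. -/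
def grid (m n : ℕ) : Board := Finset.range m ×ˢ Finset.range n

/-- The (non-taking) rook configurations on the board `A` with `k` rooks. -/
def rookConfigs (A : Board) (k : ℕ) : Finset Board :=
  A.powerset.filter fun C =>
    C.card = k ∧ ∀ c ∈ C, ∀ c' ∈ C, c ≠ c' → c.1 ≠ c'.1 ∧ c.2 ≠ c'.2

/-- `invStat m n C`: the number of (not necessarily positive) cells of an `m × n` matrix
having no rook of the configuration `C` weakly to the right in the same row nor weakly
below in the same column. -/
def invStat (m n : ℕ) (C : Board) : ℕ :=
  ((grid m n).filter fun a =>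
    (∀ c ∈ C, c.1 = a.1 → c.2 < a.2) ∧ (∀ c ∈ C, c.2 = a.2 → c.1 < a.1)).card

/-- The `k`-th `q`-rook number of a board `A` of ambient matrix size `m × n`. -/
def qRook {F : Type*} [CommSemiring F] (q : F) (m n : ℕ) (A : Board) (k : ℕ) : F :=
  ∑ C ∈ rookConfigs A k, q ^ invStat m n C

/-- The `q`-analogue `[x]_q = 1 + q + ⋯ + q^(x-1)`. -/
def qInt {F : Type*} [CommSemiring F] (q : F) (x : ℕ) : F := ∑ i ∈ Finset.range x, q ^ i

/-- The `q`-factorial `[n]!_q = [1]_q [2]_q ⋯ [n]_q`. -/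
def qFact {F : Type*} [CommSemiring F] (q : F) (n : ℕ) : F := ∏ i ∈ Finset.range n, qInt q (i + 1)

/-- The `q`-Stirling numbers `S_{n,k}(q)` of Garsia and Remmel. -/
def qStirling {F : Type*} [CommSemiring F] (q : F) : ℕ → ℕ → F
  | 0, 0 => 1
  | 0, _ + 1 => 0
  | n + 1, k => (if k = 0 then 0 else q ^ (k - 1) * qStirling q n (k - 1)) + qInt q k * qStirling q n k

/-- Stirling numbers of the second kind. -/
def stirling2 : ℕ → ℕ → ℕ
  | 0, 0 => 1
  | 0, _ + 1 => 0
  | n + 1, k => (if k = 0 then 0 else stirling2 n (k - 1)) + k * stirling2 n k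

/-- The board `A` covers the rook configuration of the permutation `π`
(a rook at `(i, π i)` for every row `i`, zero-indexed). -/
def Covers {n : ℕ} (A : Board) (π : Equiv.Perm (Fin n)) : Prop :=
  ∀ i : Fin n, ((i : ℕ), (π i : ℕ)) ∈ A

/-- `bruhatRank π i j` is the number of rooks of `π` weakly north-east of cell `(i,j)`,
i.e. `|{a ≤ i : π a ≥ j}|`. -/
def bruhatRank {n : ℕ} (π : Equiv.Perm (Fin n)) (i j : Fin n) : ℕ :=
  (Finset.univ.filter fun a : Fin n => a ≤ i ∧ j ≤ π a).card

/-- Bruhat order on the symmetric group, via the standard (Ehresmann) rank criterion. -/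
def BruhatLE {n : ℕ} (u w : Equiv.Perm (Fin n)) : Prop :=
  ∀ i j : Fin n, bruhatRank u i j ≤ bruhatRank w i j


instance {n : ℕ} (A : Board) (π : Equiv.Perm (Fin n)) : Decidable (Covers A π) :=
  inferInstanceAs (Decidable (∀ i : Fin n, ((i : ℕ), (π i : ℕ)) ∈ A))

instance {n : ℕ} (u w : Equiv.Perm (Fin n)) : Decidable (BruhatLE u w) :=
  inferInstanceAs (Decidable (∀ i j : Fin n, bruhatRank u i j ≤ bruhatRank w i j))

/-- The number of inversions of a permutation (= its Coxeter length). -/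
def inversions {n : ℕ} (π : Equiv.Perm (Fin n)) : ℕ :=
  (Finset.univ.filter fun p : Fin n × Fin n => p.1 < p.2 ∧ π p.2 < π p.1).card

/-- A right-aligned Ferrers matrix inside the `n × n` grid: every one-entry has one-entries
(weakly) to its right in the grid and above it. -/
def IsRightFerrers (n : ℕ) (A : Board) : Prop :=
  A ⊆ grid n n ∧ ∀ i j i' j' : ℕ, (i, j) ∈ A → i' ≤ i → j ≤ j' → j' < n → (i', j') ∈ A

/-- A left-aligned Ferrers matrix inside the `n × n` grid. -/
def IsLeftFerrers (n : ℕ) (A : Board) : Prop :=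
  A ⊆ grid n n ∧ ∀ i j i' j' : ℕ, (i, j) ∈ A → i' ≤ i → j' ≤ j → (i', j') ∈ A

/-- A right-aligned skew Ferrers matrix: an entrywise difference `λ - μ` of right-aligned
Ferrers matrices with `μ ≤ λ`. -/
def IsRightSkewFerrers (n : ℕ) (B : Board) : Prop :=
  ∃ L M : Board, IsRightFerrers n L ∧ IsRightFerrers n M ∧ M ⊆ L ∧ B = L \ M

/-- A left-aligned skew Ferrers matrix. -/
def IsLeftSkewFerrers (n : ℕ) (B : Board) : Prop :=
  ∃ L M : Board, IsLeftFerrers n L ∧ IsLeftFerrers n M ∧ M ⊆ L ∧ B = L \ M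

/-- `H` is the right hull of `π`: the smallest right-aligned skew Ferrers matrix covering `π`. -/
def IsRightHull {n : ℕ} (π : Equiv.Perm (Fin n)) (H : Board) : Prop :=
  IsRightSkewFerrers n H ∧ Covers H π ∧
    ∀ B : Board, IsRightSkewFerrers n B → Covers B π → H ⊆ B

/-- `H` is the left hull of `π`: the smallest left-aligned skew Ferrers matrix covering `π`. -/
def IsLeftHull {n : ℕ} (π : Equiv.Perm (Fin n)) (H : Board) : Prop :=
  IsLeftSkewFerrers n H ∧ Covers H π ∧
    ∀ B : Board, IsLeftSkewFerrers n B → Covers B π → H ⊆ B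

/-- `π` contains the pattern `σ`. -/
def ContainsPattern {n m : ℕ} (π : Equiv.Perm (Fin n)) (σ : Equiv.Perm (Fin m)) : Prop :=
  ∃ f : Fin m → Fin n, StrictMono f ∧ ∀ a b : Fin m, σ a < σ b ↔ π (f a) < π (f b)

/-- The pattern 4231 (one-line notation, here zero-indexed). -/
def p4231 : Equiv.Perm (Fin 4) := ⟨![3,1,2,0], ![3,1,2,0], by decide, by decide⟩
/-- The pattern 35142. -/
def p35142 : Equiv.Perm (Fin 5) := ⟨![2,4,0,3,1], ![2,4,0,3,1], by decide, by decide⟩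
/-- The pattern 42513. -/
def p42513 : Equiv.Perm (Fin 5) := ⟨![3,1,4,0,2], ![3,1,4,0,2], by decide, by decide⟩
/-- The pattern 351624. -/
def p351624 : Equiv.Perm (Fin 6) := ⟨![2,4,0,5,1,3], ![2,4,0,5,1,3], by decide, by decide⟩

/-- `π` avoids the four patterns 4231, 35142, 42513 and 351624. -/
def AvoidsThePatterns {n : ℕ} (π : Equiv.Perm (Fin n)) : Prop :=
  ¬ ContainsPattern π p4231 ∧ ¬ ContainsPattern π p35142 ∧
    ¬ ContainsPattern π p42513 ∧ ¬ ContainsPattern π p351624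

/-- Rotating an `m × n` board by 180 degrees. -/
def rot180 (m n : ℕ) (A : Board) : Board := A.image fun c => (m - 1 - c.1, n - 1 - c.2)

/-- Flipping an `m`-row board upside down. -/
def flipud (m : ℕ) (A : Board) : Board := A.image fun c => (m - 1 - c.1, c.2)

/-- The block matrix `B # A` with `B` (of size `nB × nB`) in the top-left corner, `A`
(of size `mA × mA`) in the bottom-right corner, and all-ones off-diagonal blocks. -/
def blockSharp (nB mA : ℕ) (B A : Board) : Board :=
  B ∪ Finset.range nB ×ˢ Finset.Ico nB (nB + mA) ∪ Finset.Ico nB (nB + mA) ×ˢ Finset.range nB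
    ∪ A.image fun c => (c.1 + nB, c.2 + nB)

/-- The 180-degree rotation of a permutation of `Fin n`: `π^↻ (i) = n - 1 - π (n - 1 - i)`. -/
def rot180Perm {n : ℕ} (π : Equiv.Perm (Fin n)) : Equiv.Perm (Fin n) :=
  (Fin.revPerm.trans π).trans Fin.revPerm

/-- The statistic `neg(π) = |{i ∈ [n+1, 2n] : π i ≤ n}|` (one-indexed) on `S_{2n}`. -/
def negStat (n : ℕ) (π : Equiv.Perm (Fin (2 * n))) : ℕ :=
  (Finset.univ.filter fun i : Fin (2 * n) => n ≤ (i : ℕ) ∧ (π i : ℕ) < n).card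

/-- `RB^M (q, t) = Σ_{π ∈ 𝔖ₙᴮ ∩ 𝔖(M)} q^{inv π} t^{neg π}` over rotationally symmetric
permutations of `S_{2n}` covered by the `2n × 2n` board `M`. -/
def RB {F : Type*} [CommSemiring F] (q t : F) (n : ℕ) (M : Board) : F :=
  ∑ π ∈ Finset.univ.filter fun π : Equiv.Perm (Fin (2 * n)) => rot180Perm π = π ∧ Covers M π,
    q ^ inversions π * t ^ negStat n π

/-- The triangular board `T_m` with ones on and above the secondary diagonal. -/
def Tboard (m : ℕ) : Board := (grid m m).filter fun c => c.1 + c.2 < m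

/-- The field `ℚ(q,t)` of rational functions in two variables. -/
noncomputable abbrev QTfield := FractionRing (MvPolynomial (Fin 2) ℚ)
/-- The variable `q` in `ℚ(q,t)`. -/
noncomputable def qvar : QTfield := algebraMap (MvPolynomial (Fin 2) ℚ) _ (MvPolynomial.X 0)
/-- The variable `t` in `ℚ(q,t)`. -/
noncomputable def tvar : QTfield := algebraMap (MvPolynomial (Fin 2) ℚ) _ (MvPolynomial.X 1)

/-!
A rotationally symmetric permutation `π` of `[0, 2n)` is determined by its bottom half
`β j = π (n + j)`; the top half takes the values `2n - 1 - β j`, so `β` only has to be injective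
with no two values summing to `2n - 1`. For `π` covered by `A^↻ # A`, the bottom rows sent to
the right half form a rook placement `C` on `A` with `n - neg π` rooks, which pins down the
top rows sent to the left half; the remaining `k = neg π` bottom rows are matched with the
`k` free columns of the bottom-left block by an arbitrary `σ ∈ S_k`. Counting inversions of `π`
by quadrants (top/bottom, rows of `C`/empty rows) and comparing with the same decomposition
of `inv_A(C)` gives `inv π + k² = 2 inv_A(C) + 2 inv σ`, and `∑_{σ ∈ S_k} q^{2 inv σ} = [k]!_{q²}`.
-/

section QFactorial

variable {k : ℕ}

noncomputable def consPerm (p : Fin (k + 1)) (e : Equiv.Perm (Fin k)) : Equiv.Perm (Fin (k + 1)) :=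
  Equiv.ofBijective (Fin.cons p fun i => p.succAbove (e i)) <|
    Finite.injective_iff_bijective.mp <| Fin.cons_injective_iff.mpr
      ⟨by simp [Fin.succAbove_ne], Fin.succAbove_right_injective.comp e.injective⟩

@[simp] lemma consPerm_zero (p : Fin (k + 1)) (e : Equiv.Perm (Fin k)) : consPerm p e 0 = p := rfl

@[simp] lemma consPerm_succ (p : Fin (k + 1)) (e : Equiv.Perm (Fin k)) (i : Fin k) :
    consPerm p e i.succ = p.succAbove (e i) := rfl

lemma inversions_eq_sum (σ : Equiv.Perm (Fin k)) :
    inversions σ = ∑ a, ∑ b, if a < b ∧ σ b < σ a then 1 else 0 := by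
  rw [inversions, card_filter, ← univ_product_univ, sum_product]

lemma inversions_consPerm (p : Fin (k + 1)) (e : Equiv.Perm (Fin k)) :
    inversions (consPerm p e) = p + inversions e := by
  have hfirst : ∑ i, (if (e i).castSucc < p then 1 else 0) = (p : ℕ) := by
    rw [Equiv.sum_comp e fun v => if v.castSucc < p then 1 else 0, ← card_filter]
    simp only [Fin.lt_def, Fin.val_castSucc, Fin.card_filter_val_lt]
    omega
  simp only [inversions_eq_sum, Fin.sum_univ_succ, consPerm_zero, consPerm_succ, lt_self_iff_false,
    false_and, if_false, zero_add, Fin.succ_pos, true_and, Fin.succAbove_lt_iff_castSucc_lt,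
    Fin.succ_lt_succ_iff, Fin.succAbove_lt_succAbove_iff, (Fin.succ_pos _).not_gt]
  rw [hfirst]

lemma consPerm_bijective :
    Function.Bijective fun pe : Fin (k + 1) × Equiv.Perm (Fin k) => consPerm pe.1 pe.2 := by
  refine (Fintype.bijective_iff_injective_and_card _).mpr
    ⟨?_, by simp [Fintype.card_perm, Nat.factorial_succ]⟩
  rintro ⟨p, e⟩ ⟨p', e'⟩ h
  obtain rfl : p = p' := by simpa using congr($h 0)
  exact Prod.ext rfl <| Equiv.ext fun i => by simpa using congr($h i.succ)

theorem sum_pow_inversions {F : Type*} [CommSemiring F] (x : F) (k : ℕ) :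
    ∑ σ : Equiv.Perm (Fin k), x ^ inversions σ = qFact x k := by
  induction k with
  | zero => simp [qFact, inversions]
  | succ k ih =>
    rw [← consPerm_bijective.sum_comp, Fintype.sum_prod_type]
    simp only [inversions_consPerm, pow_add, ← sum_mul_sum, ih, qFact, prod_range_succ, qInt,
      Fin.sum_univ_eq_sum_range (x ^ ·), mul_comm]

end QFactorial

section CardFilter

variable {α β γ δ : Type*}

lemma card_filter_of_bijOn {s : Finset α} {t : Finset β} {e : α → β} (he : Set.BijOn e s t)
    (p : β → Prop) [DecidablePred p] : #(s.filter fun a => p (e a)) = #(t.filter p) := by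
  refine card_nbij e (fun a ha => ?_) (he.injOn.mono fun a ha => (mem_filter.mp ha).1)
    fun b hb => ?_
  · simp only [coe_filter, Set.mem_ofPred_eq] at ha ⊢
    exact ⟨he.mapsTo ha.1, ha.2⟩
  · simp only [coe_filter, Set.mem_ofPred_eq] at hb
    obtain ⟨a, ha, rfl⟩ := he.surjOn hb.1
    exact ⟨a, by simpa using ⟨ha, hb.2⟩, rfl⟩

lemma card_filter_product_of_bijOn {s₁ : Finset α} {s₂ : Finset β} {t₁ : Finset γ}
    {t₂ : Finset δ} {e₁ : α → γ} {e₂ : β → δ} (h₁ : Set.BijOn e₁ s₁ t₁) (h₂ : Set.BijOn e₂ s₂ t₂)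
    (p : γ × δ → Prop) [DecidablePred p] :
    #((s₁ ×ˢ s₂).filter fun r => p (e₁ r.1, e₂ r.2)) = #((t₁ ×ˢ t₂).filter p) :=
  card_filter_of_bijOn (by simpa only [coe_product] using h₁.prodMap h₂) p

lemma card_filter_product_swap_of_bijOn {s₁ : Finset α} {s₂ : Finset β} {t₁ : Finset γ}
    {t₂ : Finset δ} {e₁ : α → γ} {e₂ : β → δ} (h₁ : Set.BijOn e₁ s₁ t₁) (h₂ : Set.BijOn e₂ s₂ t₂)
    (p : δ × γ → Prop) [DecidablePred p] :
    #((s₁ ×ˢ s₂).filter fun r => p (e₂ r.2, e₁ r.1)) = #((t₂ ×ˢ t₁).filter p) := by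
  have hswap : Set.BijOn Prod.swap ((t₁ : Set γ) ×ˢ (t₂ : Set δ)) (↑t₂ ×ˢ ↑t₁) :=
    ⟨fun x hx => hx.symm, Prod.swap_injective.injOn, fun x hx => ⟨x.swap, hx.symm, x.swap_swap⟩⟩
  have h := hswap.comp (h₁.prodMap h₂)
  rw [← coe_product, ← coe_product] at h
  exact card_filter_of_bijOn h p

lemma card_filter_union_product [DecidableEq α] [DecidableEq β] {s₁ s₂ : Finset α}
    {t₁ t₂ : Finset β} (hs : Disjoint s₁ s₂) (ht : Disjoint t₁ t₂) (p : α × β → Prop)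
    [DecidablePred p] :
    #(((s₁ ∪ s₂) ×ˢ (t₁ ∪ t₂)).filter p) = #((s₁ ×ˢ t₁).filter p) + #((s₁ ×ˢ t₂).filter p)
      + #((s₂ ×ˢ t₁).filter p) + #((s₂ ×ˢ t₂).filter p) := by
  have hd : ∀ {a b : Finset α} {c d : Finset β}, Disjoint a b ∨ Disjoint c d →
      Disjoint ((a ×ˢ c).filter p) ((b ×ˢ d).filter p) :=
    fun h => disjoint_filter_filter (disjoint_product.mpr h)
  rw [product_union, filter_union, card_union_of_disjoint (hd (Or.inr ht)), union_product,
    union_product, filter_union, filter_union, card_union_of_disjoint (hd (Or.inl hs)),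
    card_union_of_disjoint (hd (Or.inl hs))]
  ring

end CardFilter

section TransferPerm

variable {k : ℕ} {s t : Finset ℕ} (hs : #s = k) (ht : #t = k)

/-- `σ` read as a bijection `s → t` through the increasing enumerations of `s` and `t`
(and `0` off `s`). -/
noncomputable def transferPerm (σ : Equiv.Perm (Fin k)) (j : ℕ) : ℕ :=
  if hj : j ∈ s then t.orderIsoOfFin ht (σ ((s.orderIsoOfFin hs).symm ⟨j, hj⟩)) else 0

lemma transferPerm_of_mem (σ : Equiv.Perm (Fin k)) {j : ℕ} (hj : j ∈ s) :
    transferPerm hs ht σ j = t.orderIsoOfFin ht (σ ((s.orderIsoOfFin hs).symm ⟨j, hj⟩)) :=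
  dif_pos hj

lemma transferPerm_orderIsoOfFin (σ : Equiv.Perm (Fin k)) (a : Fin k) :
    transferPerm hs ht σ (s.orderIsoOfFin hs a) = t.orderIsoOfFin ht (σ a) := by
  rw [transferPerm_of_mem hs ht σ (s.orderIsoOfFin hs a).2, Subtype.coe_eta,
    OrderIso.symm_apply_apply]

include hs in
lemma bijOn_orderIsoOfFin :
    Set.BijOn (fun a => (s.orderIsoOfFin hs a : ℕ)) ↑(univ : Finset (Fin k)) s := by
  refine ⟨fun a _ => (s.orderIsoOfFin hs a).2,
    fun a _ b _ h => (s.orderIsoOfFin hs).injective (Subtype.ext h), fun j hj => ?_⟩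
  exact ⟨(s.orderIsoOfFin hs).symm ⟨j, hj⟩, by simp, by simp⟩

lemma bijOn_transferPerm (σ : Equiv.Perm (Fin k)) : Set.BijOn (transferPerm hs ht σ) s t := by
  have hmaps : Set.MapsTo (transferPerm hs ht σ) s t := fun j hj => by
    rw [mem_coe, transferPerm_of_mem hs ht σ hj]
    exact Subtype.mem _
  have hinj : Set.InjOn (transferPerm hs ht σ) s := fun i hi j hj h => by
    rw [transferPerm_of_mem hs ht σ hi, transferPerm_of_mem hs ht σ hj] at h
    simpa using (t.orderIsoOfFin ht).injective (Subtype.ext h)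
  exact ⟨hmaps, hinj, surjOn_of_injOn_of_card_le _ hmaps hinj (by rw [hs, ht])⟩

lemma transferPerm_injective {σ σ' : Equiv.Perm (Fin k)}
    (h : ∀ j ∈ s, transferPerm hs ht σ j = transferPerm hs ht σ' j) : σ = σ' :=
  Equiv.ext fun a => (t.orderIsoOfFin ht).injective <| Subtype.ext <| by
    simpa only [transferPerm_orderIsoOfFin] using h _ (s.orderIsoOfFin hs a).2

lemma exists_transferPerm_eq {f : ℕ → ℕ} (hf : Set.MapsTo f s t) (hinj : Set.InjOn f s) :
    ∃ σ : Equiv.Perm (Fin k), ∀ j ∈ s, transferPerm hs ht σ j = f j := by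
  let g : Fin k → Fin k := fun a =>
    (t.orderIsoOfFin ht).symm ⟨f (s.orderIsoOfFin hs a), hf (s.orderIsoOfFin hs a).2⟩
  have hg : Function.Injective g := fun a b hab => by
    simpa using hinj (s.orderIsoOfFin hs a).2 (s.orderIsoOfFin hs b).2 (by simpa [g] using hab)
  refine ⟨Equiv.ofBijective g (Finite.injective_iff_bijective.mp hg), fun j hj => ?_⟩
  simp only [transferPerm_of_mem hs ht _ hj, Equiv.ofBijective_apply, g, OrderIso.apply_symm_apply]

lemma card_inversions_transferPerm (σ : Equiv.Perm (Fin k)) :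
    #((s ×ˢ s).filter fun r => r.1 < r.2 ∧ transferPerm hs ht σ r.2 < transferPerm hs ht σ r.1) =
      inversions σ := by
  rw [← card_filter_product_of_bijOn (bijOn_orderIsoOfFin hs) (bijOn_orderIsoOfFin hs), inversions,
    ← univ_product_univ]
  congr 1
  refine filter_congr fun r _ => ?_
  simp only [transferPerm_orderIsoOfFin, Subtype.coe_lt_coe, OrderIso.lt_iff_lt]

end TransferPerm

section RookPlacement

def NonAttacking (C : Board) : Prop :=
  ∀ c ∈ C, ∀ c' ∈ C, c ≠ c' → c.1 ≠ c'.1 ∧ c.2 ≠ c'.2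

lemma mem_rookConfigs {A C : Board} {m : ℕ} :
    C ∈ rookConfigs A m ↔ C ⊆ A ∧ #C = m ∧ NonAttacking C := by
  rw [rookConfigs, mem_filter, mem_powerset, NonAttacking]

lemma mem_grid {m n : ℕ} {c : ℕ × ℕ} : c ∈ grid m n ↔ c.1 < m ∧ c.2 < n := by
  simp [grid]

def rowsOf (C : Board) : Finset ℕ := C.image Prod.fst

def colsOf (C : Board) : Finset ℕ := C.image Prod.snd

/-- The column of the rook in row `j`; meaningful only if row `j` holds exactly one rook. -/
def colOf (C : Board) (j : ℕ) : ℕ := ∑ c ∈ C.filter (·.1 = j), c.2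

/-- The row of the rook in column `j`; meaningful only if column `j` holds exactly one rook. -/
def rowOf (C : Board) (j : ℕ) : ℕ := ∑ c ∈ C.filter (·.2 = j), c.1

def emptyRows (n : ℕ) (C : Board) : Finset ℕ := range n \ rowsOf C

def emptyCols (n : ℕ) (C : Board) : Finset ℕ := range n \ colsOf C

variable {n : ℕ} {C : Board}

lemma mem_emptyRows {j : ℕ} : j ∈ emptyRows n C ↔ j < n ∧ j ∉ rowsOf C := by
  rw [emptyRows, mem_sdiff, mem_range]

lemma mem_emptyCols {j : ℕ} : j ∈ emptyCols n C ↔ j < n ∧ j ∉ colsOf C := by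
  rw [emptyCols, mem_sdiff, mem_range]

lemma colOf_eq (hC : NonAttacking C) {c : ℕ × ℕ} (hc : c ∈ C) : colOf C c.1 = c.2 := by
  rw [colOf, sum_eq_single_of_mem c (mem_filter.mpr ⟨hc, rfl⟩ : c ∈ C.filter (·.1 = c.1))]
  exact fun c' hc' hne => absurd (mem_filter.mp hc').2 (hC c' (mem_filter.mp hc').1 c hc hne).1

lemma rowOf_eq (hC : NonAttacking C) {c : ℕ × ℕ} (hc : c ∈ C) : rowOf C c.2 = c.1 := by
  rw [rowOf, sum_eq_single_of_mem c (mem_filter.mpr ⟨hc, rfl⟩ : c ∈ C.filter (·.2 = c.2))]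
  exact fun c' hc' hne => absurd (mem_filter.mp hc').2 (hC c' (mem_filter.mp hc').1 c hc hne).2

lemma bijOn_rowsOf (hC : NonAttacking C) :
    Set.BijOn (fun j => (j, colOf C j)) (rowsOf C) C := by
  refine ⟨?_, fun i _ j _ h => congrArg Prod.fst h, fun c hc => ⟨c.1, ?_, ?_⟩⟩
  · rintro _ hj
    obtain ⟨c, hc, rfl⟩ := mem_image.mp hj
    simpa [colOf_eq hC hc] using hc
  · exact mem_image_of_mem _ hc
  · simp [colOf_eq hC hc]

lemma bijOn_colsOf (hC : NonAttacking C) :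
    Set.BijOn (fun j => (rowOf C j, j)) (colsOf C) C := by
  refine ⟨?_, fun i _ j _ h => congrArg Prod.snd h, fun c hc => ⟨c.2, ?_, ?_⟩⟩
  · rintro _ hj
    obtain ⟨c, hc, rfl⟩ := mem_image.mp hj
    simpa [rowOf_eq hC hc] using hc
  · exact mem_image_of_mem _ hc
  · simp [rowOf_eq hC hc]

lemma colOf_mem_colsOf (hC : NonAttacking C) {j : ℕ} (hj : j ∈ rowsOf C) :
    colOf C j ∈ colsOf C :=
  mem_image_of_mem Prod.snd ((bijOn_rowsOf hC).mapsTo hj)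

lemma colOf_injOn (hC : NonAttacking C) : Set.InjOn (colOf C) (rowsOf C) := by
  intro j hj j' hj' h
  by_contra hne
  exact (hC _ ((bijOn_rowsOf hC).mapsTo hj) _ ((bijOn_rowsOf hC).mapsTo hj') (by simp [hne])).2 h

lemma rowsOf_subset (hg : C ⊆ grid n n) : rowsOf C ⊆ range n := by
  intro j hj
  obtain ⟨c, hc, rfl⟩ := mem_image.mp hj
  exact mem_range.mpr (mem_grid.mp (hg hc)).1

lemma colsOf_subset (hg : C ⊆ grid n n) : colsOf C ⊆ range n := by
  intro j hj
  obtain ⟨c, hc, rfl⟩ := mem_image.mp hj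
  exact mem_range.mpr (mem_grid.mp (hg hc)).2

lemma range_eq_rowsOf_union_emptyRows (hg : C ⊆ grid n n) :
    range n = rowsOf C ∪ emptyRows n C :=
  (union_sdiff_of_subset (rowsOf_subset hg)).symm

lemma range_eq_colsOf_union_emptyCols (hg : C ⊆ grid n n) :
    range n = colsOf C ∪ emptyCols n C :=
  (union_sdiff_of_subset (colsOf_subset hg)).symm

lemma mem_rowsOf_or_emptyRows {j : ℕ} (hj : j < n) : j ∈ rowsOf C ∨ j ∈ emptyRows n C := by
  by_cases h : j ∈ rowsOf C
  · exact Or.inl h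
  · exact Or.inr (mem_emptyRows.mpr ⟨hj, h⟩)

lemma colOf_lt (hg : C ⊆ grid n n) (hC : NonAttacking C) {j : ℕ} (hj : j ∈ rowsOf C) :
    colOf C j < n :=
  (mem_grid.mp (hg ((bijOn_rowsOf hC).mapsTo hj))).2

lemma card_emptyRows (hg : C ⊆ grid n n) (hC : NonAttacking C) :
    #(emptyRows n C) + #C = n := by
  rw [emptyRows, card_sdiff_of_subset (rowsOf_subset hg), card_range,
    ← (bijOn_rowsOf hC).finsetCard_eq]
  have := card_le_card (rowsOf_subset hg)
  rw [card_range] at this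
  omega

lemma card_emptyCols (hg : C ⊆ grid n n) (hC : NonAttacking C) :
    #(emptyCols n C) + #C = n := by
  rw [emptyCols, card_sdiff_of_subset (colsOf_subset hg), card_range,
    ← (bijOn_colsOf hC).finsetCard_eq]
  have := card_le_card (colsOf_subset hg)
  rw [card_range] at this
  omega

end RookPlacement

section InvStat

variable {n : ℕ} {C : Board}

def rookInvPairs (C : Board) : Finset ((ℕ × ℕ) × (ℕ × ℕ)) :=
  (C ×ˢ C).filter fun r => r.1.1 < r.2.1 ∧ r.2.2 < r.1.2

def rookRowPairs (n : ℕ) (C : Board) : Finset ((ℕ × ℕ) × ℕ) :=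
  (C ×ˢ emptyRows n C).filter fun r => r.1.1 < r.2

def rookColPairs (n : ℕ) (C : Board) : Finset ((ℕ × ℕ) × ℕ) :=
  (C ×ˢ emptyCols n C).filter fun r => r.1.2 < r.2

lemma forall_row_iff (hC : NonAttacking C) {a b : ℕ} (ha : a ∈ rowsOf C) :
    (∀ c ∈ C, c.1 = a → c.2 < b) ↔ colOf C a < b := by
  refine ⟨fun h => h _ ((bijOn_rowsOf hC).mapsTo ha) rfl, fun h c hc hca => ?_⟩
  rwa [← colOf_eq hC hc, hca]

lemma forall_col_iff (hC : NonAttacking C) {a b : ℕ} (hb : b ∈ colsOf C) :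
    (∀ c ∈ C, c.2 = b → c.1 < a) ↔ rowOf C b < a := by
  refine ⟨fun h => h _ ((bijOn_colsOf hC).mapsTo hb) rfl, fun h c hc hcb => ?_⟩
  rwa [← rowOf_eq hC hc, hcb]

lemma forall_row_of_notMem {a b : ℕ} (ha : a ∉ rowsOf C) : ∀ c ∈ C, c.1 = a → c.2 < b :=
  fun c hc hca => absurd (mem_image.mpr ⟨c, hc, hca⟩) ha

lemma forall_col_of_notMem {a b : ℕ} (hb : b ∉ colsOf C) : ∀ c ∈ C, c.2 = b → c.1 < a :=
  fun c hc hcb => absurd (mem_image.mpr ⟨c, hc, hcb⟩) hb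

lemma invStat_eq (hg : C ⊆ grid n n) (hC : NonAttacking C) :
    invStat n n C = #(rookInvPairs C) + #(rookColPairs n C) + #(rookRowPairs n C)
      + #(emptyRows n C) * #(emptyCols n C) := by
  rw [invStat, grid]
  nth_rewrite 1 [range_eq_rowsOf_union_emptyRows hg]
  rw [range_eq_colsOf_union_emptyCols hg, card_filter_union_product (s₂ := emptyRows n C)
    (t₂ := emptyCols n C) disjoint_sdiff disjoint_sdiff]
  congr 1; congr 1; congr 1
  · rw [rookInvPairs, ← card_filter_product_swap_of_bijOn (bijOn_rowsOf hC) (bijOn_colsOf hC)]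
    refine congrArg card (filter_congr fun r hr => ?_)
    rw [mem_product] at hr
    rw [forall_row_iff hC hr.1, forall_col_iff hC hr.2, and_comm]
  · rw [rookColPairs, ← card_filter_product_of_bijOn (bijOn_rowsOf hC) (Set.bijOn_id _)]
    refine congrArg card (filter_congr fun r hr => ?_)
    rw [mem_product, mem_emptyCols] at hr
    rw [forall_row_iff hC hr.1, and_iff_left (forall_col_of_notMem hr.2.2)]
    rfl
  · rw [rookRowPairs, ← card_filter_product_swap_of_bijOn (Set.bijOn_id _) (bijOn_colsOf hC)]
    refine congrArg card (filter_congr fun r hr => ?_)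
    rw [mem_product, mem_emptyRows] at hr
    rw [forall_col_iff hC hr.2, and_iff_right (forall_row_of_notMem hr.1.2)]
    rfl
  · rw [← card_product]
    refine congrArg card (filter_true_of_mem fun r hr => ?_)
    rw [mem_product, mem_emptyRows, mem_emptyCols] at hr
    exact ⟨forall_row_of_notMem hr.1.2, forall_col_of_notMem hr.2.2⟩

end InvStat

section SymmetricHalf

/-- The rotationally symmetric function on `[0, 2n)` sending row `n + j` to `β j`. -/
def symExt (n : ℕ) (β : ℕ → ℕ) (i : ℕ) : ℕ :=
  if i < n then 2 * n - 1 - β (n - 1 - i) else β (i - n)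

/-- `symExt n β` is a permutation of `[0, 2n)`: `add_ne` says that the values `2n - 1 - β j` of
the top half avoid those of the bottom half. -/
structure IsSymHalf (n : ℕ) (β : ℕ → ℕ) : Prop where
  lt : ∀ j < n, β j < 2 * n
  inj : ∀ j < n, ∀ j' < n, β j = β j' → j = j'
  add_ne : ∀ j < n, ∀ j' < n, β j + β j' ≠ 2 * n - 1

variable {n : ℕ} {β : ℕ → ℕ}

lemma symExt_of_lt {i : ℕ} (hi : i < n) : symExt n β i = 2 * n - 1 - β (n - 1 - i) := if_pos hi

lemma symExt_of_le {i : ℕ} (hi : n ≤ i) : symExt n β i = β (i - n) := if_neg (not_lt.mpr hi)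

lemma IsSymHalf.symExt_lt (h : IsSymHalf n β) {i : ℕ} (hi : i < 2 * n) :
    symExt n β i < 2 * n := by
  rcases lt_or_ge i n with hin | hin
  · rw [symExt_of_lt hin]; omega
  · rw [symExt_of_le hin]; exact h.lt _ (by omega)

lemma IsSymHalf.symExt_inj (h : IsSymHalf n β) {i i' : ℕ} (hi : i < 2 * n) (hi' : i' < 2 * n)
    (heq : symExt n β i = symExt n β i') : i = i' := by
  rcases lt_or_ge i n with hin | hin <;> rcases lt_or_ge i' n with hin' | hin'
  · rw [symExt_of_lt hin, symExt_of_lt hin'] at heq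
    have := h.inj (n - 1 - i) (by omega) (n - 1 - i') (by omega)
      (by have := h.lt (n - 1 - i) (by omega); have := h.lt (n - 1 - i') (by omega); omega)
    omega
  · rw [symExt_of_lt hin, symExt_of_le hin'] at heq
    exact absurd (by have := h.lt (n - 1 - i) (by omega); omega)
      (h.add_ne (i' - n) (by omega) (n - 1 - i) (by omega))
  · rw [symExt_of_le hin, symExt_of_lt hin'] at heq
    exact absurd (by have := h.lt (n - 1 - i') (by omega); omega)
      (h.add_ne (i - n) (by omega) (n - 1 - i') (by omega))
  · rw [symExt_of_le hin, symExt_of_le hin'] at heq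
    have := h.inj (i - n) (by omega) (i' - n) (by omega) heq
    omega

noncomputable def symPerm (h : IsSymHalf n β) : Equiv.Perm (Fin (2 * n)) :=
  Equiv.ofBijective (fun i => ⟨symExt n β i, h.symExt_lt i.2⟩) <|
    Finite.injective_iff_bijective.mp fun i i' hii' =>
      Fin.ext (h.symExt_inj i.2 i'.2 (congrArg Fin.val hii'))

@[simp] lemma val_symPerm (h : IsSymHalf n β) (i : Fin (2 * n)) :
    (symPerm h i : ℕ) = symExt n β i := rfl

lemma rot180Perm_symPerm (h : IsSymHalf n β) : rot180Perm (symPerm h) = symPerm h := by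
  refine Equiv.ext fun i => Fin.ext ?_
  have hi := i.2
  simp only [rot180Perm, Equiv.trans_apply, Fin.revPerm_apply, Fin.val_rev, val_symPerm]
  rcases lt_or_ge (i : ℕ) n with hin | hin
  · rw [symExt_of_le (by omega), symExt_of_lt hin]
    have := h.lt (n - 1 - i) (by omega)
    rw [show 2 * n - (i + 1) - n = n - 1 - i by omega]
    omega
  · rw [symExt_of_lt (by omega), symExt_of_le hin]
    have := h.lt (i - n) (by omega)
    rw [show n - 1 - (2 * n - (i + 1)) = i - n by omega]
    omega

lemma symPerm_congr {β' : ℕ → ℕ} (h : IsSymHalf n β) (h' : IsSymHalf n β')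
    (heq : ∀ j < n, β j = β' j) : symPerm h = symPerm h' := by
  refine Equiv.ext fun i => Fin.ext ?_
  have hi := i.2
  simp only [val_symPerm, symExt]
  split_ifs <;> rw [heq _ (by omega)]

end SymmetricHalf

section HalfOf

variable {n : ℕ}

def halfOf (π : Equiv.Perm (Fin (2 * n))) (j : ℕ) : ℕ :=
  if hj : n + j < 2 * n then π ⟨n + j, hj⟩ else 0

lemma halfOf_of_lt (π : Equiv.Perm (Fin (2 * n))) {j : ℕ} (hj : j < n) :
    halfOf π j = π ⟨n + j, by omega⟩ :=
  dif_pos (by omega)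

lemma halfOf_symPerm {β : ℕ → ℕ} (h : IsSymHalf n β) {j : ℕ} (hj : j < n) :
    halfOf (symPerm h) j = β j := by
  rw [halfOf_of_lt _ hj, val_symPerm, Fin.val_mk, symExt_of_le (by omega),
    Nat.add_sub_cancel_left]

lemma val_rev_of_rot180Perm_eq {π : Equiv.Perm (Fin (2 * n))} (hπ : rot180Perm π = π)
    (i : Fin (2 * n)) : (π i.rev : ℕ) = 2 * n - 1 - π i := by
  have h := congrArg (fun ρ : Equiv.Perm (Fin (2 * n)) => (ρ i : ℕ)) hπ
  simp only [rot180Perm, Equiv.trans_apply, Fin.revPerm_apply, Fin.val_rev] at h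
  have := (π i.rev).2
  omega

lemma isSymHalf_halfOf {π : Equiv.Perm (Fin (2 * n))} (hπ : rot180Perm π = π) :
    IsSymHalf n (halfOf π) where
  lt j hj := by rw [halfOf_of_lt π hj]; exact (π _).2
  inj j hj j' hj' heq := by
    rw [halfOf_of_lt π hj, halfOf_of_lt π hj'] at heq
    simpa using π.injective (Fin.ext heq)
  add_ne j hj j' hj' heq := by
    rw [halfOf_of_lt π hj, halfOf_of_lt π hj'] at heq
    have hrev := val_rev_of_rot180Perm_eq hπ ⟨n + j, by omega⟩
    have hval : (π (Fin.rev ⟨n + j, by omega⟩) : ℕ) = π ⟨n + j', by omega⟩ := by omega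
    have := congrArg Fin.val (π.injective (Fin.ext hval))
    simp only [Fin.val_rev] at this
    omega

lemma symPerm_halfOf {π : Equiv.Perm (Fin (2 * n))} (hπ : rot180Perm π = π) :
    symPerm (isSymHalf_halfOf hπ) = π := by
  refine Equiv.ext fun i => Fin.ext ?_
  have hi := i.2
  rw [val_symPerm]
  rcases lt_or_ge (i : ℕ) n with hin | hin
  · rw [symExt_of_lt hin, halfOf_of_lt π (by omega)]
    have := val_rev_of_rot180Perm_eq hπ i
    have hrev : (⟨n + (n - 1 - i), by omega⟩ : Fin (2 * n)) = i.rev := Fin.ext (by simp; omega)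
    rw [hrev]
    omega
  · rw [symExt_of_le hin, halfOf_of_lt π (by omega)]
    congr 3
    omega

end HalfOf

section BlockBoard

variable {n : ℕ} {A : Board}

lemma mem_rot180_iff (hA : A ⊆ grid n n) {i j : ℕ} :
    (i, j) ∈ rot180 n n A ↔ i < n ∧ j < n ∧ (n - 1 - i, n - 1 - j) ∈ A := by
  simp only [rot180, mem_image, Prod.mk.injEq, Prod.exists]
  constructor
  · rintro ⟨a, b, hab, rfl, rfl⟩
    have := mem_grid.mp (hA hab)
    refine ⟨by omega, by omega, ?_⟩
    rwa [show n - 1 - (n - 1 - a) = a by omega, show n - 1 - (n - 1 - b) = b by omega]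
  · rintro ⟨hi, hj, h⟩
    exact ⟨_, _, h, by omega, by omega⟩

lemma mem_blockSharp_iff (hA : A ⊆ grid n n) {i j : ℕ} :
    (i, j) ∈ blockSharp n n (rot180 n n A) A ↔
      (i < n ∧ j < n ∧ (n - 1 - i, n - 1 - j) ∈ A) ∨ (i < n ∧ n ≤ j ∧ j < 2 * n) ∨
        (n ≤ i ∧ i < 2 * n ∧ j < n) ∨ (n ≤ i ∧ n ≤ j ∧ (i - n, j - n) ∈ A) := by
  have hshift : (i, j) ∈ A.image (fun c => (c.1 + n, c.2 + n)) ↔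
      n ≤ i ∧ n ≤ j ∧ (i - n, j - n) ∈ A := by
    simp only [mem_image, Prod.mk.injEq, Prod.exists]
    constructor
    · rintro ⟨a, b, hab, rfl, rfl⟩
      simpa using hab
    · rintro ⟨hi, hj, h⟩
      exact ⟨_, _, h, by omega, by omega⟩
  simp only [blockSharp, mem_union, mem_rot180_iff hA, mem_product, mem_range, mem_Ico, hshift,
    two_mul, or_assoc, and_assoc]

end BlockBoard

section SymPermStatistics

variable {n : ℕ} {β : ℕ → ℕ}

/-- The rooks of `symPerm` in the bottom-right `n × n` block, in the coordinates of that
block. -/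
def boardOf (n : ℕ) (β : ℕ → ℕ) : Board :=
  ((range n).filter (n ≤ β ·)).image fun j => (j, β j - n)

lemma mem_boardOf {c : ℕ × ℕ} :
    c ∈ boardOf n β ↔ c.1 < n ∧ n ≤ β c.1 ∧ c.2 = β c.1 - n := by
  simp only [boardOf, mem_image, mem_filter, mem_range]
  constructor
  · rintro ⟨j, ⟨hj, hβ⟩, rfl⟩
    exact ⟨hj, hβ, rfl⟩
  · rintro ⟨hj, hβ, hc⟩
    exact ⟨c.1, ⟨hj, hβ⟩, Prod.ext rfl hc.symm⟩

lemma IsSymHalf.nonAttacking_boardOf (h : IsSymHalf n β) : NonAttacking (boardOf n β) := by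
  intro c hc c' hc' hne
  rw [mem_boardOf] at hc hc'
  refine ⟨fun h1 => hne (Prod.ext h1 (by rw [hc.2.2, hc'.2.2, h1])), fun h2 => hne ?_⟩
  have := h.inj c.1 hc.1 c'.1 hc'.1 (by omega)
  exact Prod.ext this h2

lemma IsSymHalf.boardOf_subset_grid (h : IsSymHalf n β) : boardOf n β ⊆ grid n n := by
  intro c hc
  rw [mem_boardOf] at hc
  have := h.lt c.1 hc.1
  exact mem_grid.mpr ⟨hc.1, by omega⟩

lemma rowsOf_boardOf : rowsOf (boardOf n β) = (range n).filter (n ≤ β ·) := by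
  rw [rowsOf, boardOf, image_image]
  exact image_id'

lemma boardOf_congr {β' : ℕ → ℕ} (heq : ∀ j < n, β j = β' j) :
    boardOf n β = boardOf n β' := by
  ext c
  simp only [mem_boardOf]
  constructor <;> rintro ⟨hc, hle, hc2⟩ <;> simp only [heq c.1 hc] at * <;> exact ⟨hc, hle, hc2⟩

lemma boardOf_subset_iff {A : Board} :
    boardOf n β ⊆ A ↔ ∀ j < n, n ≤ β j → (j, β j - n) ∈ A := by
  simp [boardOf, image_subset_iff]

lemma covers_symPerm_iff {A : Board} (hA : A ⊆ grid n n) (h : IsSymHalf n β) :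
    Covers (blockSharp n n (rot180 n n A) A) (symPerm h) ↔ boardOf n β ⊆ A := by
  rw [boardOf_subset_iff]
  constructor
  · intro hcov j hj hβ
    have hmem := hcov ⟨n + j, by omega⟩
    rw [val_symPerm, Fin.val_mk, symExt_of_le (by omega), Nat.add_sub_cancel_left,
      mem_blockSharp_iff hA] at hmem
    simpa [show ¬ n + j < n by omega, show ¬ β j < n by omega, hβ] using hmem
  · intro hβ i
    have hi := i.2
    rw [val_symPerm, mem_blockSharp_iff hA]
    rcases lt_or_ge (i : ℕ) n with hin | hin
    · rw [symExt_of_lt hin]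
      have := h.lt (n - 1 - i) (by omega)
      by_cases hlt : β (n - 1 - i) < n
      · exact Or.inr (Or.inl ⟨hin, by omega, by omega⟩)
      · refine Or.inl ⟨hin, by omega, ?_⟩
        rw [show n - 1 - (2 * n - 1 - β (n - 1 - i)) = β (n - 1 - i) - n by omega]
        exact hβ _ (by omega) (by omega)
    · rw [symExt_of_le hin]
      by_cases hlt : β (i - n) < n
      · exact Or.inr (Or.inr (Or.inl ⟨hin, hi, hlt⟩))
      · exact Or.inr (Or.inr (Or.inr ⟨hin, by omega, hβ _ (by omega) (by omega)⟩))

lemma negStat_symPerm (h : IsSymHalf n β) :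
    negStat n (symPerm h) = #((range n).filter (β · < n)) := by
  rw [negStat]
  refine card_bij (fun i _ => (i : ℕ) - n) (fun i hi => ?_) (fun i hi i' hi' hii' => ?_)
    (fun j hj => ?_)
  · rw [mem_filter, val_symPerm] at hi
    rw [symExt_of_le hi.2.1] at hi
    have := i.2
    exact mem_filter.mpr ⟨mem_range.mpr (by omega), hi.2.2⟩
  · rw [mem_filter] at hi hi'
    exact Fin.ext (by omega)
  · simp only [mem_filter, mem_range] at hj
    refine ⟨⟨n + j, by omega⟩, ?_, by simp⟩
    rw [mem_filter, val_symPerm, Fin.val_mk, symExt_of_le (by omega), Nat.add_sub_cancel_left]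
    exact ⟨mem_univ _, by omega, hj.2⟩

def invCount (m : ℕ) (f : ℕ → ℕ) : ℕ :=
  #((grid m m).filter fun r => r.1 < r.2 ∧ f r.2 < f r.1)

/-- The inversions of `symExt n β` between a top row `n - 1 - j` and a bottom row `n + j'`. -/
def crossCount (n : ℕ) (β : ℕ → ℕ) : ℕ :=
  #((grid n n).filter fun r => β r.1 + β r.2 + 2 ≤ 2 * n)

lemma inversions_eq_invCount {m : ℕ} (π : Equiv.Perm (Fin m)) {f : ℕ → ℕ}
    (hf : ∀ i : Fin m, (π i : ℕ) = f i) : inversions π = invCount m f := by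
  have he : Set.BijOn (fun r : Fin m × Fin m => ((r.1 : ℕ), (r.2 : ℕ)))
      ↑(univ : Finset (Fin m × Fin m)) ↑(grid m m) := by
    refine ⟨fun r _ => mem_grid.mpr ⟨r.1.2, r.2.2⟩, fun r _ r' _ h => ?_, fun r hr => ?_⟩
    · simp only [Prod.mk.injEq] at h
      exact Prod.ext (Fin.ext h.1) (Fin.ext h.2)
    · have := mem_grid.mp hr
      exact ⟨(⟨r.1, this.1⟩, ⟨r.2, this.2⟩), by simp, rfl⟩
  rw [invCount, ← card_filter_of_bijOn he, inversions]
  congr 1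
  refine filter_congr fun r _ => ?_
  simp only [Fin.lt_def, hf]

lemma range_two_mul_eq_union : range (2 * n) = range n ∪ Ico n (2 * n) := by
  rw [range_eq_Ico, range_eq_Ico, Ico_union_Ico_eq_Ico (Nat.zero_le n) (by omega)]

lemma bijOn_reflect_range : Set.BijOn (fun i => n - 1 - i) (range n) (range n) := by
  refine ⟨fun i hi => ?_, fun i hi i' hi' h => ?_, fun i hi => ⟨n - 1 - i, ?_, ?_⟩⟩ <;>
    simp only [coe_range, Set.mem_Iio] at * <;> omega

lemma bijOn_sub_Ico : Set.BijOn (· - n) (Ico n (2 * n)) (range n) := by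
  refine ⟨fun i hi => ?_, fun i hi i' hi' h => ?_, fun i hi => ⟨n + i, ?_, ?_⟩⟩ <;>
    simp only [coe_range, coe_Ico, Set.mem_Iio, Set.mem_Ico] at * <;> omega

lemma invCount_symExt (h : ∀ j < n, β j < 2 * n) :
    invCount (2 * n) (symExt n β) = 2 * invCount n β + crossCount n β := by
  have hdisj : Disjoint (range n) (Ico n (2 * n)) := by
    rw [range_eq_Ico]
    exact Ico_disjoint_Ico_consecutive 0 n (2 * n)
  rw [invCount, grid, range_two_mul_eq_union, card_filter_union_product hdisj hdisj,
    show 2 * invCount n β + crossCount n β = invCount n β + crossCount n β + 0 + invCount n β by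
      ring]
  congr 1; congr 1; congr 1
  · rw [invCount, grid]
    refine Eq.trans ?_ (card_filter_product_swap_of_bijOn bijOn_reflect_range bijOn_reflect_range _)
    refine congrArg card (filter_congr fun r hr => ?_)
    dsimp only
    simp only [mem_product, mem_range] at hr
    rw [symExt_of_lt hr.1, symExt_of_lt hr.2]
    have := h (n - 1 - r.1) (by omega)
    have := h (n - 1 - r.2) (by omega)
    omega
  · rw [crossCount, grid]
    refine Eq.trans ?_ (card_filter_product_of_bijOn bijOn_reflect_range bijOn_sub_Ico _)
    refine congrArg card (filter_congr fun r hr => ?_)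
    dsimp only
    simp only [mem_product, mem_range, mem_Ico] at hr
    rw [symExt_of_lt hr.1, symExt_of_le hr.2.1]
    have := h (n - 1 - r.1) (by omega)
    have := h (r.2 - n) (by omega)
    omega
  · refine card_eq_zero.mpr (filter_false_of_mem fun r hr => ?_)
    simp only [mem_product, mem_range, mem_Ico] at hr
    omega
  · rw [invCount, grid]
    refine Eq.trans ?_ (card_filter_product_of_bijOn bijOn_sub_Ico bijOn_sub_Ico _)
    refine congrArg card (filter_congr fun r hr => ?_)
    dsimp only
    simp only [mem_product, mem_Ico] at hr
    rw [symExt_of_le hr.1.1, symExt_of_le hr.2.1]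
    omega

lemma inversions_symPerm (h : IsSymHalf n β) :
    inversions (symPerm h) = 2 * invCount n β + crossCount n β := by
  rw [inversions_eq_invCount _ (val_symPerm h), invCount_symExt h.lt]

end SymPermStatistics

section RookHalf

variable {n k : ℕ} {C : Board}

/-- The columns of the bottom-left block left free by the top half: the rook of `C` in row `j`
and column `c` forces row `n - 1 - j` of the top half into column `n - 1 - c`. -/
def revEmptyCols (n : ℕ) (C : Board) : Finset ℕ :=
  (range n).filter fun t => n - 1 - t ∉ colsOf C

lemma mem_revEmptyCols {t : ℕ} : t ∈ revEmptyCols n C ↔ t < n ∧ n - 1 - t ∉ colsOf C := by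
  rw [revEmptyCols, mem_filter, mem_range]

lemma bijOn_revEmptyCols :
    Set.BijOn (fun t => n - 1 - t) (revEmptyCols n C) (emptyCols n C) := by
  refine ⟨fun t ht => ?_, fun t ht t' ht' h => ?_, fun u hu => ⟨n - 1 - u, ?_, ?_⟩⟩
  · rw [mem_coe, mem_revEmptyCols] at ht
    exact mem_emptyCols.mpr ⟨show n - 1 - t < n by omega, ht.2⟩
  · rw [mem_coe, mem_revEmptyCols] at ht ht'
    dsimp only at h
    omega
  · rw [mem_coe, mem_emptyCols] at hu
    rw [mem_coe, mem_revEmptyCols, show n - 1 - (n - 1 - u) = u by omega]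
    exact ⟨by omega, hu.2⟩
  · rw [mem_coe, mem_emptyCols] at hu
    dsimp only
    omega

lemma card_revEmptyCols (hg : C ⊆ grid n n) (hC : NonAttacking C) :
    #(revEmptyCols n C) + #C = n := by
  rw [bijOn_revEmptyCols.finsetCard_eq, card_emptyCols hg hC]

/-- The bottom half of the symmetric permutation with rooks `C` in the bottom-right block whose
remaining rows are matched with `revEmptyCols n C` by `σ`. -/
noncomputable def rookHalf (hS : #(emptyRows n C) = k) (hT : #(revEmptyCols n C) = k)
    (σ : Equiv.Perm (Fin k)) (j : ℕ) : ℕ :=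
  if j ∈ rowsOf C then n + colOf C j else transferPerm hS hT σ j

variable (hS : #(emptyRows n C) = k) (hT : #(revEmptyCols n C) = k) (σ : Equiv.Perm (Fin k))

lemma rookHalf_of_mem_rowsOf {j : ℕ} (hj : j ∈ rowsOf C) :
    rookHalf hS hT σ j = n + colOf C j :=
  if_pos hj

lemma rookHalf_of_mem_emptyRows {j : ℕ} (hj : j ∈ emptyRows n C) :
    rookHalf hS hT σ j = transferPerm hS hT σ j :=
  if_neg (mem_sdiff.mp hj).2

lemma rookHalf_mem_revEmptyCols {j : ℕ} (hj : j ∈ emptyRows n C) :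
    rookHalf hS hT σ j ∈ revEmptyCols n C := by
  rw [rookHalf_of_mem_emptyRows hS hT σ hj]
  exact (bijOn_transferPerm hS hT σ).mapsTo hj

lemma rookHalf_lt_of_mem_emptyRows {j : ℕ} (hj : j ∈ emptyRows n C) : rookHalf hS hT σ j < n :=
  (mem_revEmptyCols.mp (rookHalf_mem_revEmptyCols hS hT σ hj)).1

lemma bijOn_reflect_rookHalf :
    Set.BijOn (fun j => n - 1 - rookHalf hS hT σ j) (emptyRows n C) (emptyCols n C) :=
  (bijOn_revEmptyCols.comp (bijOn_transferPerm hS hT σ)).congr fun j hj => by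
    simp [rookHalf_of_mem_emptyRows hS hT σ hj]

lemma isSymHalf_rookHalf (hg : C ⊆ grid n n) (hC : NonAttacking C) :
    IsSymHalf n (rookHalf hS hT σ) := by
  have hR {j : ℕ} (hj : j ∈ rowsOf C) : rookHalf hS hT σ j = n + colOf C j ∧ colOf C j < n :=
    ⟨rookHalf_of_mem_rowsOf hS hT σ hj, colOf_lt hg hC hj⟩
  have hE {j : ℕ} (hj : j ∈ emptyRows n C) :
      rookHalf hS hT σ j < n ∧ n - 1 - rookHalf hS hT σ j ∉ colsOf C :=
    mem_revEmptyCols.mp (rookHalf_mem_revEmptyCols hS hT σ hj)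
  refine ⟨fun j hj => ?_, fun j hj j' hj' heq => ?_, fun j hj j' hj' heq => ?_⟩
  · rcases mem_rowsOf_or_emptyRows hj with h | h
    · have := hR h; omega
    · have := hE h; omega
  · rcases mem_rowsOf_or_emptyRows hj with h | h <;>
      rcases mem_rowsOf_or_emptyRows hj' with h' | h'
    · exact colOf_injOn hC h h' (by have := hR h; have := hR h'; omega)
    · have := hR h; have := hE h'; omega
    · have := hE h; have := hR h'; omega
    · rw [rookHalf_of_mem_emptyRows hS hT σ h, rookHalf_of_mem_emptyRows hS hT σ h'] at heq
      exact (bijOn_transferPerm hS hT σ).injOn h h' heq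
  · rcases mem_rowsOf_or_emptyRows hj with h | h <;>
      rcases mem_rowsOf_or_emptyRows hj' with h' | h'
    · have := hR h; have := hR h'; omega
    · have := hR h
      refine (hE h').2 ?_
      rw [show n - 1 - rookHalf hS hT σ j' = colOf C j by omega]
      exact colOf_mem_colsOf hC h
    · have := hR h'
      refine (hE h).2 ?_
      rw [show n - 1 - rookHalf hS hT σ j = colOf C j' by omega]
      exact colOf_mem_colsOf hC h'
    · have := hE h; have := hE h'; omega

end RookHalf

section RookHalfStatistics

variable {n k : ℕ} {C : Board} (hS : #(emptyRows n C) = k) (hT : #(revEmptyCols n C) = k)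
  (σ : Equiv.Perm (Fin k))

lemma filter_rookHalf_lt :
    (range n).filter (rookHalf hS hT σ · < n) = emptyRows n C := by
  ext j
  rw [mem_filter, mem_range]
  constructor
  · rintro ⟨hj, hlt⟩
    refine (mem_rowsOf_or_emptyRows hj).resolve_left fun h => ?_
    rw [rookHalf_of_mem_rowsOf hS hT σ h] at hlt
    omega
  · intro h
    exact ⟨(mem_emptyRows.mp h).1, rookHalf_lt_of_mem_emptyRows hS hT σ h⟩

lemma boardOf_rookHalf (hg : C ⊆ grid n n) (hC : NonAttacking C) :
    boardOf n (rookHalf hS hT σ) = C := by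
  have hrows : (range n).filter (n ≤ rookHalf hS hT σ ·) = rowsOf C := by
    ext j
    rw [mem_filter, mem_range]
    constructor
    · rintro ⟨hj, hle⟩
      refine (mem_rowsOf_or_emptyRows hj).resolve_right fun h => ?_
      have := rookHalf_lt_of_mem_emptyRows hS hT σ h
      omega
    · intro h
      rw [rookHalf_of_mem_rowsOf hS hT σ h]
      exact ⟨mem_range.mp (rowsOf_subset hg h), by omega⟩
  rw [boardOf, hrows]
  refine coe_injective ?_
  rw [coe_image, ← (bijOn_rowsOf hC).image_eq]
  refine Set.image_congr fun j hj => ?_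
  rw [rookHalf_of_mem_rowsOf hS hT σ hj, Nat.add_sub_cancel_left]

lemma invCount_rookHalf (hg : C ⊆ grid n n) (hC : NonAttacking C) :
    invCount n (rookHalf hS hT σ) = #(rookInvPairs C) + #(rookRowPairs n C) + inversions σ := by
  have hE {j : ℕ} (hj : j ∈ emptyRows n C) := rookHalf_lt_of_mem_emptyRows hS hT σ hj
  rw [invCount, grid, range_eq_rowsOf_union_emptyRows hg,
    card_filter_union_product (s₂ := emptyRows n C) (t₂ := emptyRows n C) disjoint_sdiff
      disjoint_sdiff, ← add_zero (_ + #(rookRowPairs n C))]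
  congr 1; congr 1; congr 1
  · refine Eq.trans ?_ (card_filter_product_of_bijOn (bijOn_rowsOf hC) (bijOn_rowsOf hC) _)
    refine congrArg card (filter_congr fun r hr => ?_)
    rw [mem_product] at hr
    rw [rookHalf_of_mem_rowsOf hS hT σ hr.1, rookHalf_of_mem_rowsOf hS hT σ hr.2]
    dsimp only
    omega
  · refine Eq.trans ?_ (card_filter_product_of_bijOn (bijOn_rowsOf hC) (Set.bijOn_id _) _)
    refine congrArg card (filter_congr fun r hr => ?_)
    rw [mem_product] at hr
    rw [rookHalf_of_mem_rowsOf hS hT σ hr.1]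
    have := hE hr.2
    dsimp only [id]
    omega
  · refine card_eq_zero.mpr (filter_false_of_mem fun r hr => ?_)
    rw [mem_product] at hr
    rw [rookHalf_of_mem_rowsOf hS hT σ hr.2]
    have := hE hr.1
    omega
  · rw [← card_inversions_transferPerm hS hT σ]
    refine congrArg card (filter_congr fun r hr => ?_)
    rw [mem_product] at hr
    rw [rookHalf_of_mem_emptyRows hS hT σ hr.1, rookHalf_of_mem_emptyRows hS hT σ hr.2]

lemma crossCount_rookHalf (hg : C ⊆ grid n n) (hC : NonAttacking C) :
    crossCount n (rookHalf hS hT σ) = 2 * #(rookColPairs n C) + k * k := by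
  have hE {j : ℕ} (hj : j ∈ emptyRows n C) := rookHalf_lt_of_mem_emptyRows hS hT σ hj
  rw [crossCount, grid, range_eq_rowsOf_union_emptyRows hg,
    card_filter_union_product (s₂ := emptyRows n C) (t₂ := emptyRows n C) disjoint_sdiff
      disjoint_sdiff,
    show 2 * #(rookColPairs n C) + k * k =
      0 + #(rookColPairs n C) + #(rookColPairs n C) + k * k by ring]
  congr 1; congr 1; congr 1
  · refine card_eq_zero.mpr (filter_false_of_mem fun r hr => ?_)
    rw [mem_product] at hr
    rw [rookHalf_of_mem_rowsOf hS hT σ hr.1, rookHalf_of_mem_rowsOf hS hT σ hr.2]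
    omega
  · refine Eq.trans ?_
      (card_filter_product_of_bijOn (bijOn_rowsOf hC) (bijOn_reflect_rookHalf hS hT σ) _)
    refine congrArg card (filter_congr fun r hr => ?_)
    rw [mem_product] at hr
    rw [rookHalf_of_mem_rowsOf hS hT σ hr.1]
    have := hE hr.2
    dsimp only
    omega
  · refine Eq.trans ?_
      (card_filter_product_swap_of_bijOn (bijOn_reflect_rookHalf hS hT σ) (bijOn_rowsOf hC) _)
    refine congrArg card (filter_congr fun r hr => ?_)
    rw [mem_product] at hr
    rw [rookHalf_of_mem_rowsOf hS hT σ hr.2]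
    have := hE hr.1
    dsimp only
    omega
  · refine Eq.trans ?_ ((card_product _ _).trans (congrArg₂ (· * ·) hS hS))
    refine congrArg card (filter_true_of_mem fun r hr => ?_)
    rw [mem_product] at hr
    have := hE hr.1
    have := hE hr.2
    omega

end RookHalfStatistics

section Decoding

variable {n : ℕ} {β : ℕ → ℕ}

lemma IsSymHalf.exists_rookHalf_eq (h : IsSymHalf n β) {k : ℕ}
    (hS : #(emptyRows n (boardOf n β)) = k) (hT : #(revEmptyCols n (boardOf n β)) = k) :
    ∃ σ : Equiv.Perm (Fin k), ∀ j < n, rookHalf hS hT σ j = β j := by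
  have hE {j : ℕ} : j ∈ emptyRows n (boardOf n β) ↔ j < n ∧ β j < n := by
    rw [mem_emptyRows, rowsOf_boardOf, mem_filter, mem_range]
    omega
  have hmaps : Set.MapsTo β (emptyRows n (boardOf n β)) (revEmptyCols n (boardOf n β)) := by
    intro j hj
    rw [mem_coe, hE] at hj
    refine mem_revEmptyCols.mpr ⟨hj.2, fun hcol => ?_⟩
    obtain ⟨c, hc, hc2⟩ := mem_image.mp hcol
    rw [mem_boardOf] at hc
    exact h.add_ne j hj.1 c.1 hc.1 (by omega)
  have hinj : Set.InjOn β (emptyRows n (boardOf n β)) := fun j hj j' hj' heq =>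
    h.inj j (hE.mp hj).1 j' (hE.mp hj').1 heq
  obtain ⟨σ, hσ⟩ := exists_transferPerm_eq hS hT hmaps hinj
  refine ⟨σ, fun j hj => ?_⟩
  rcases mem_rowsOf_or_emptyRows hj with hrow | hempty
  · rw [rookHalf_of_mem_rowsOf hS hT σ hrow]
    have hβ := (mem_filter.mp (rowsOf_boardOf ▸ hrow)).2
    rw [colOf_eq h.nonAttacking_boardOf (mem_boardOf.mpr ⟨hj, hβ, rfl⟩ : (j, β j - n) ∈ _)]
    omega
  · rw [rookHalf_of_mem_emptyRows hS hT σ hempty, hσ j hempty]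

end Decoding

section Bijection

variable {n : ℕ} {A : Board}

def rookData (n : ℕ) (A : Board) : Finset (Σ k : ℕ, Board × Equiv.Perm (Fin k)) :=
  (range (n + 1)).sigma fun k => rookConfigs A (n - k) ×ˢ univ

structure IsRookDatum (n : ℕ) (A : Board) (k : ℕ) (C : Board) : Prop where
  subset : C ⊆ A
  subset_grid : C ⊆ grid n n
  nonAttacking : NonAttacking C
  card_emptyRows : #(emptyRows n C) = k
  card_revEmptyCols : #(revEmptyCols n C) = k

lemma isRookDatum_of_mem (hA : A ⊆ grid n n) {d : Σ k : ℕ, Board × Equiv.Perm (Fin k)}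
    (hd : d ∈ rookData n A) : IsRookDatum n A d.1 d.2.1 := by
  rw [rookData, mem_sigma, mem_range, mem_product, mem_rookConfigs] at hd
  obtain ⟨hk, ⟨hCA, hcard, hC⟩, -⟩ := hd
  have hg := hCA.trans hA
  have := card_emptyRows hg hC
  have := card_revEmptyCols hg hC
  exact ⟨hCA, hg, hC, by omega, by omega⟩

noncomputable def rookPerm {k : ℕ} {C : Board} (hd : IsRookDatum n A k C)
    (σ : Equiv.Perm (Fin k)) : Equiv.Perm (Fin (2 * n)) :=
  symPerm <| isSymHalf_rookHalf hd.card_emptyRows hd.card_revEmptyCols σ hd.subset_grid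
    hd.nonAttacking

lemma halfOf_rookPerm {k : ℕ} {C : Board} (hd : IsRookDatum n A k C) (σ : Equiv.Perm (Fin k))
    {j : ℕ} (hj : j < n) :
    halfOf (rookPerm hd σ) j = rookHalf hd.card_emptyRows hd.card_revEmptyCols σ j :=
  halfOf_symPerm _ hj

lemma rot180Perm_rookPerm {k : ℕ} {C : Board} (hd : IsRookDatum n A k C)
    (σ : Equiv.Perm (Fin k)) :
    rot180Perm (rookPerm hd σ) = rookPerm hd σ :=
  rot180Perm_symPerm _

lemma covers_rookPerm (hA : A ⊆ grid n n) {k : ℕ} {C : Board} (hd : IsRookDatum n A k C)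
    (σ : Equiv.Perm (Fin k)) : Covers (blockSharp n n (rot180 n n A) A) (rookPerm hd σ) := by
  rw [rookPerm, covers_symPerm_iff hA, boardOf_rookHalf _ _ _ hd.subset_grid hd.nonAttacking]
  exact hd.subset

lemma negStat_rookPerm {k : ℕ} {C : Board} (hd : IsRookDatum n A k C)
    (σ : Equiv.Perm (Fin k)) :
    negStat n (rookPerm hd σ) = k := by
  rw [rookPerm, negStat_symPerm, filter_rookHalf_lt, hd.card_emptyRows]

lemma inversions_rookPerm_add {k : ℕ} {C : Board} (hd : IsRookDatum n A k C)
    (σ : Equiv.Perm (Fin k)) :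
    inversions (rookPerm hd σ) + k * k = 2 * invStat n n C + 2 * inversions σ := by
  have hU : #(emptyCols n C) = k := by
    have := card_emptyCols hd.subset_grid hd.nonAttacking
    have := card_emptyRows hd.subset_grid hd.nonAttacking
    have := hd.card_emptyRows
    omega
  rw [rookPerm, inversions_symPerm, invCount_rookHalf _ _ σ hd.subset_grid hd.nonAttacking,
    crossCount_rookHalf _ _ σ hd.subset_grid hd.nonAttacking,
    invStat_eq hd.subset_grid hd.nonAttacking, hd.card_emptyRows, hU]
  ring

lemma rookPerm_inj {k₁ k₂ : ℕ} {C₁ C₂ : Board} (hd₁ : IsRookDatum n A k₁ C₁)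
    (hd₂ : IsRookDatum n A k₂ C₂) {σ₁ : Equiv.Perm (Fin k₁)} {σ₂ : Equiv.Perm (Fin k₂)}
    (h : rookPerm hd₁ σ₁ = rookPerm hd₂ σ₂) :
    (⟨k₁, C₁, σ₁⟩ : Σ k : ℕ, Board × Equiv.Perm (Fin k)) = ⟨k₂, C₂, σ₂⟩ := by
  have hβ : ∀ j < n, rookHalf hd₁.card_emptyRows hd₁.card_revEmptyCols σ₁ j =
      rookHalf hd₂.card_emptyRows hd₂.card_revEmptyCols σ₂ j := fun j hj => by
    rw [← halfOf_rookPerm hd₁ σ₁ hj, ← halfOf_rookPerm hd₂ σ₂ hj, h]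
  obtain rfl : C₁ = C₂ := by
    rw [← boardOf_rookHalf hd₁.card_emptyRows hd₁.card_revEmptyCols σ₁ hd₁.subset_grid
      hd₁.nonAttacking, ← boardOf_rookHalf hd₂.card_emptyRows hd₂.card_revEmptyCols σ₂
      hd₂.subset_grid hd₂.nonAttacking, boardOf_congr hβ]
  obtain rfl : k₁ = k₂ := hd₁.card_emptyRows.symm.trans hd₂.card_emptyRows
  obtain rfl : σ₁ = σ₂ := transferPerm_injective hd₁.card_emptyRows hd₁.card_revEmptyCols
    fun j hj => by
      rw [← rookHalf_of_mem_emptyRows _ _ σ₁ hj, ← rookHalf_of_mem_emptyRows hd₂.card_emptyRows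
        hd₂.card_revEmptyCols σ₂ hj]
      exact hβ j (mem_emptyRows.mp hj).1
  rfl

lemma exists_rookPerm_eq (hA : A ⊆ grid n n) {π : Equiv.Perm (Fin (2 * n))}
    (hsym : rot180Perm π = π) (hcov : Covers (blockSharp n n (rot180 n n A) A) π) :
    ∃ d, ∃ hd : d ∈ rookData n A, rookPerm (isRookDatum_of_mem hA hd) d.2.2 = π := by
  have h := isSymHalf_halfOf hsym
  have hCA := (covers_symPerm_iff hA h).mp (by rwa [symPerm_halfOf hsym])
  have hS := card_emptyRows h.boardOf_subset_grid h.nonAttacking_boardOf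
  have hT := card_revEmptyCols h.boardOf_subset_grid h.nonAttacking_boardOf
  obtain ⟨σ, hσ⟩ := h.exists_rookHalf_eq rfl (by omega)
  refine ⟨⟨_, boardOf n (halfOf π), σ⟩, ?_, (symPerm_congr _ h hσ).trans (symPerm_halfOf hsym)⟩
  simp only [rookData, mem_sigma, mem_range, mem_product, mem_rookConfigs]
  exact ⟨by omega, ⟨hCA, by omega, h.nonAttacking_boardOf⟩, mem_univ _⟩

end Bijection

section Summation

variable {F : Type*} [Field F] {n : ℕ} {A : Board}

lemma pow_mul_pow_mul_zpow_neg_sq {q : F} (hq : q ≠ 0) {a b m k : ℕ}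
    (h : m + k * k = 2 * a + 2 * b) : (q ^ 2) ^ a * (q ^ 2) ^ b * q ^ (-(k : ℤ) ^ 2) = q ^ m := by
  rw [← pow_mul, ← pow_mul, ← pow_add, ← zpow_natCast, ← zpow_add₀ hq, ← zpow_natCast]
  congr 1
  have := congrArg (Nat.cast : ℕ → ℤ) h
  push_cast at this ⊢
  linarith

lemma sum_range_qRook_eq_sum_rookData (q t : F) :
    ∑ i ∈ range (n + 1),
        qRook (q ^ 2) n n A (n - i) * qFact (q ^ 2) i * q ^ (-(i : ℤ) ^ 2) * t ^ i =
      ∑ d ∈ rookData n A, (q ^ 2) ^ invStat n n d.2.1 * (q ^ 2) ^ inversions d.2.2 *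
        q ^ (-(d.1 : ℤ) ^ 2) * t ^ d.1 := by
  rw [rookData, sum_sigma]
  refine sum_congr rfl fun i _ => ?_
  rw [sum_product, qRook, ← sum_pow_inversions, sum_mul_sum, sum_mul, sum_mul]
  simp only [mul_assoc, sum_mul]

lemma sum_rookData_eq_RB (hA : A ⊆ grid n n) {q : F} (hq : q ≠ 0) (t : F) :
    ∑ d ∈ rookData n A, (q ^ 2) ^ invStat n n d.2.1 * (q ^ 2) ^ inversions d.2.2 *
        q ^ (-(d.1 : ℤ) ^ 2) * t ^ d.1 = RB q t n (blockSharp n n (rot180 n n A) A) := by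
  refine sum_bij (fun d hd => rookPerm (isRookDatum_of_mem hA hd) d.2.2) (fun d hd => ?_)
    (fun d₁ hd₁ d₂ hd₂ h => ?_) (fun π hπ => ?_) (fun d hd => ?_)
  · exact mem_filter.mpr ⟨mem_univ _, rot180Perm_rookPerm _ _, covers_rookPerm hA _ _⟩
  · exact rookPerm_inj _ _ h
  · obtain ⟨-, hsym, hcov⟩ := mem_filter.mp hπ
    exact exists_rookPerm_eq hA hsym hcov
  · rw [negStat_rookPerm, pow_mul_pow_mul_zpow_neg_sq hq (inversions_rookPerm_add _ _)]

end Summation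

/-- For an `n × n` board `A`,
`RB^{A^↻#A}(q,t) = Σ_{i=0}^n R_{n-i}^A(q²) · [i]!_{q²} · q^{-i²} · t^i`. -/
theorem RB_blockSharp (n : ℕ) (A : Board) (hA : A ⊆ grid n n) :
    RB qvar tvar n (blockSharp n n (rot180 n n A) A) =
      ∑ i ∈ Finset.range (n + 1),
        qRook (qvar ^ 2) n n A (n - i) * qFact (qvar ^ 2) i * qvar ^ (-(i : ℤ) ^ 2) *
          tvar ^ i := by
  have hq : qvar ≠ 0 := by
    rw [qvar, ne_eq, IsFractionRing.to_map_eq_zero_iff]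
    exact MvPolynomial.X_ne_zero 0
  rw [← sum_rookData_eq_RB hA hq, sum_range_qRook_eq_sum_rookData]
end

section
/- Let 0 ≤ k ≤ n and let w ∈ S_n be the permutation (n−k+1, n−k+2, …, n, 1, 2, …, n−k) (the maximal element of A_{n−1}^{S∖{s_k}}). Then the number of elements of the lower Bruhat interval [id, w] in S_n equals Σ_{i=0}^{k} S_{k+1,i+1} · S_{n−k+1,i+1} · (i!)², where S_{a,b} are the Stirling numbers of the second kind. -/
open Finset

namespace CIA
open Finset Equiv

lemma card_filter_Ico (n c d : ℕ) :
    ((univ : Finset (Fin n)).filter fun a : Fin n => c ≤ (a : ℕ) ∧ (a : ℕ) < d).card = min d n - c := by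
  rw [← Nat.card_Ico c (min d n)]
  refine Finset.card_bij' (fun (a : Fin n) (_ : a ∈ _) => (a : ℕ))
    (fun x hx => (⟨x, lt_of_lt_of_le (Finset.mem_Ico.mp hx).2 (Nat.min_le_right d n)⟩ : Fin n)) ?_ ?_ ?_ ?_
  · intro a ha
    simp only [Finset.mem_filter, Finset.mem_univ, true_and] at ha
    simp only [Finset.mem_Ico]
    omega
  · intro x hx
    simp only [Finset.mem_Ico] at hx
    simp only [Finset.mem_filter, Finset.mem_univ, true_and, Fin.val_mk]
    exact ⟨hx.1, lt_of_lt_of_le hx.2 (Nat.min_le_left d n)⟩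
  · intro a ha; exact Fin.ext rfl
  · intro x hx; rfl

lemma card_filter_lt (n d : ℕ) :
    ((univ : Finset (Fin n)).filter fun a : Fin n => (a : ℕ) < d).card = min d n := by
  have h := card_filter_Ico n 0 d
  simp only [Nat.zero_le, true_and, Nat.sub_zero] at h
  exact h

lemma card_filter_le_val (n c : ℕ) :
    ((univ : Finset (Fin n)).filter fun a : Fin n => c ≤ (a : ℕ)).card = n - c := by
  have h := card_filter_Ico n c n
  simp only [min_self] at h
  rw [← h]
  apply congrArg
  apply Finset.filter_congr
  intro a _
  simp only [a.isLt, and_true]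

variable {n : ℕ}

lemma rank_split_le (v : Perm (Fin n)) (i j : Fin n) :
    bruhatRank v i j
      + ((univ : Finset (Fin n)).filter fun a : Fin n => a ≤ i ∧ ((v a : ℕ) < (j : ℕ))).card
      = (i : ℕ) + 1 := by
  unfold bruhatRank
  have h1 : ∀ a : Fin n, (a ≤ i ∧ j ≤ v a) ↔ (a ≤ i ∧ ¬ ((v a : ℕ) < (j : ℕ))) := by
    intro a
    rw [Fin.le_def, Fin.le_def]
    omega
  have h2 : ∀ a : Fin n, (a ≤ i ∧ ((v a : ℕ) < (j : ℕ))) ↔ (a ≤ i ∧ ¬ ¬ ((v a : ℕ) < (j : ℕ))) := by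
    intro a; simp
  rw [Finset.filter_congr (fun a _ => h1 a), Finset.filter_congr (fun a _ => h2 a)]
  rw [← Finset.filter_filter, ← Finset.filter_filter]
  rw [Finset.card_filter_add_card_filter_not]
  have h3 : ∀ a : Fin n, (a ≤ i) ↔ ((a:ℕ) < (i:ℕ) + 1) := by
    intro a; rw [Fin.le_def]; omega
  rw [Finset.filter_congr (fun a _ => h3 a), card_filter_lt]
  have := i.isLt; omega

lemma bruhatLE_one (v : Perm (Fin n)) : BruhatLE 1 v := by
  intro i j
  have h1 : bruhatRank (1 : Perm (Fin n)) i j = min ((i:ℕ)+1) n - (j:ℕ) := by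
    unfold bruhatRank
    have h : ∀ a : Fin n, (a ≤ i ∧ j ≤ (1 : Perm (Fin n)) a) ↔ ((j:ℕ) ≤ (a:ℕ) ∧ (a:ℕ) < (i:ℕ)+1) := by
      intro a
      simp only [Perm.one_apply]
      rw [Fin.le_def, Fin.le_def]
      omega
    rw [Finset.filter_congr (fun a _ => h a), card_filter_Ico]
  have h2 := rank_split_le v i j
  have h3 : ((univ : Finset (Fin n)).filter fun a : Fin n => a ≤ i ∧ ((v a : ℕ) < (j : ℕ))).card
      ≤ (j : ℕ) := by
    have hsub : ((univ : Finset (Fin n)).filter fun a : Fin n => a ≤ i ∧ ((v a : ℕ) < (j : ℕ)))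
        ⊆ ((univ : Finset (Fin n)).filter fun a : Fin n => ((v a : ℕ) < (j : ℕ))) := by
      intro a ha
      simp only [Finset.mem_filter, Finset.mem_univ, true_and] at *
      exact ha.2
    have hc : ((univ : Finset (Fin n)).filter fun a : Fin n => ((v a : ℕ) < (j : ℕ))).card
        = ((univ : Finset (Fin n)).filter fun b : Fin n => ((b : ℕ) < (j : ℕ))).card := by
      apply Finset.card_nbij' (i := fun a => v a) (j := fun b => v.symm b)
      · intro a ha; simp only [Finset.mem_coe, Finset.mem_filter, Finset.mem_univ, true_and] at *; exact ha
      · intro b hb; simp only [Finset.mem_coe, Finset.mem_filter, Finset.mem_univ, true_and] at *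
        rw [Equiv.apply_symm_apply]; exact hb
      · intro a _; simp
      · intro b _; simp
    have h4 := Finset.card_le_card hsub
    rw [hc, card_filter_lt] at h4
    have := j.isLt; omega
  have hi := i.isLt
  rw [h1]
  omega

section BandEquiv

variable {k m : ℕ} {w : Perm (Fin (k + m))}
  (hw : ∀ i : Fin (k + m), (w i : ℕ) = if (i : ℕ) < k then (i : ℕ) + m else (i : ℕ) - k)

include hw in
/-- closed form for the rank function of `w`. -/
lemma rank_w_eq (i j : Fin (k + m)) :
    bruhatRank w i j
      = (min ((i:ℕ)+1) k - ((j:ℕ) - m)) + (((i:ℕ)+1) - ((j:ℕ)+k)) := by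
  unfold bruhatRank
  have hdisj : Disjoint
      ((univ : Finset (Fin (k+m))).filter fun a : Fin (k+m) =>
        ((j:ℕ) - m ≤ (a:ℕ) ∧ (a:ℕ) < min ((i:ℕ)+1) k))
      ((univ : Finset (Fin (k+m))).filter fun a : Fin (k+m) =>
        ((j:ℕ)+k ≤ (a:ℕ) ∧ (a:ℕ) < (i:ℕ)+1)) := by
    rw [Finset.disjoint_left]
    intro a h1 h2
    simp only [Finset.mem_filter, Finset.mem_univ, true_and] at h1 h2
    omega
  have hsplit : ((univ : Finset (Fin (k+m))).filter fun a : Fin (k+m) => a ≤ i ∧ j ≤ w a)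
      = ((univ : Finset (Fin (k+m))).filter fun a : Fin (k+m) =>
          ((j:ℕ) - m ≤ (a:ℕ) ∧ (a:ℕ) < min ((i:ℕ)+1) k))
        ∪ ((univ : Finset (Fin (k+m))).filter fun a : Fin (k+m) =>
          ((j:ℕ)+k ≤ (a:ℕ) ∧ (a:ℕ) < (i:ℕ)+1)) := by
    rw [← Finset.filter_or]
    apply Finset.filter_congr
    intro a _
    have hwa := hw a
    have ha := a.isLt
    have hj := j.isLt
    rw [Fin.le_def, Fin.le_def, hwa]
    by_cases hak : (a:ℕ) < k
    · simp only [if_pos hak]; omega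
    · simp only [if_neg hak]; omega
  rw [hsplit, Finset.card_union_of_disjoint hdisj, card_filter_Ico, card_filter_Ico]
  have := i.isLt
  omega

variable {v : Perm (Fin (k + m))}
  (hb : ∀ a : Fin (k + m), (v a : ℕ) ≤ (a : ℕ) + m ∧ (a : ℕ) ≤ (v a : ℕ) + k)

include hb in
lemma boundU1 (i j : Fin (k+m)) :
    bruhatRank v i j ≤ ((i:ℕ)+1) - ((j:ℕ) - m) := by
  unfold bruhatRank
  have hsub : ((univ : Finset (Fin (k+m))).filter fun a : Fin (k+m) => a ≤ i ∧ j ≤ v a)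
      ⊆ ((univ : Finset (Fin (k+m))).filter fun a : Fin (k+m) =>
          ((j:ℕ) - m ≤ (a:ℕ) ∧ (a:ℕ) < (i:ℕ)+1)) := by
    intro a ha
    simp only [Finset.mem_filter, Finset.mem_univ, true_and] at *
    obtain ⟨h1, h2⟩ := ha
    rw [Fin.le_def] at h1 h2
    have := (hb a).1
    omega
  have h := Finset.card_le_card hsub
  rw [card_filter_Ico] at h
  omega

include hb in
lemma boundU2 (i j : Fin (k+m)) :
    bruhatRank v i j ≤ min ((i:ℕ)+m+1) (k+m) - (j:ℕ) := by
  unfold bruhatRank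
  rw [← Nat.card_Ico ((j:ℕ)) (min ((i:ℕ)+m+1) (k+m))]
  apply Finset.card_le_card_of_injOn (fun a => (v a : ℕ))
  · intro a ha
    simp only [Finset.mem_coe, Finset.mem_filter, Finset.mem_univ, true_and] at ha
    obtain ⟨h1, h2⟩ := ha
    rw [Fin.le_def] at h1 h2
    have h3 := (hb a).1
    have h4 := (v a).isLt
    simp only [Finset.mem_coe, Finset.mem_Ico]
    omega
  · intro a _ b _ hab
    exact v.injective (Fin.ext hab)

include hb in
lemma boundU3 (i j : Fin (k+m)) :
    bruhatRank v i j ≤ ((i:ℕ)+1) - min (j:ℕ) (((i:ℕ)+1) - k) := by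
  have h2 := rank_split_le v i j
  have h3 : ((univ : Finset (Fin (k+m))).filter fun b : Fin (k+m) =>
        (b:ℕ) < min (j:ℕ) (((i:ℕ)+1) - k)).card
      ≤ ((univ : Finset (Fin (k+m))).filter fun a : Fin (k+m) =>
        a ≤ i ∧ ((v a : ℕ) < (j : ℕ))).card := by
    apply Finset.card_le_card_of_injOn (fun b => v.symm b)
    · intro b hbm
      simp only [Finset.mem_coe, Finset.mem_filter, Finset.mem_univ, true_and] at *
      have h5 := (hb (v.symm b)).2
      rw [Equiv.apply_symm_apply] at h5
      have h6 : (v (v.symm b) : ℕ) = (b : ℕ) := by rw [Equiv.apply_symm_apply]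
      rw [Fin.le_def]
      omega
    · intro a _ b _ hab
      have := congrArg v hab
      simpa using this
  rw [card_filter_lt] at h3
  have hj := j.isLt
  have hi := i.isLt
  omega

include hb in
lemma boundU4 (i j : Fin (k+m)) :
    bruhatRank v i j ≤ ((k+m) - (j:ℕ)) - ((k+m) - max ((i:ℕ)+1) ((j:ℕ)+k)) := by
  classical
  have hcol : ((univ : Finset (Fin (k+m))).filter fun a : Fin (k+m) => (j:ℕ) ≤ (v a : ℕ)).card
      = (k+m) - (j:ℕ) := by
    rw [← card_filter_le_val (k+m) (j:ℕ)]
    apply Finset.card_nbij' (i := fun a => v a) (j := fun b => v.symm b)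
    · intro a ha; simp only [Finset.mem_coe, Finset.mem_filter, Finset.mem_univ, true_and] at *; exact ha
    · intro b hbm; simp only [Finset.mem_coe, Finset.mem_filter, Finset.mem_univ, true_and] at *
      rw [Equiv.apply_symm_apply]; exact hbm
    · intro a _; simp
    · intro b _; simp
  have hsplit : bruhatRank v i j
      + ((univ : Finset (Fin (k+m))).filter fun a : Fin (k+m) =>
          ¬ (a ≤ i) ∧ (j:ℕ) ≤ (v a : ℕ)).card
      = (k+m) - (j:ℕ) := by
    rw [← hcol]
    unfold bruhatRank
    have e1 : ∀ a : Fin (k+m), (a ≤ i ∧ j ≤ v a) ↔ ((j:ℕ) ≤ (v a:ℕ) ∧ a ≤ i) := by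
      intro a; rw [Fin.le_def (a := j)]; tauto
    have e2 : ∀ a : Fin (k+m), (¬ (a ≤ i) ∧ (j:ℕ) ≤ (v a : ℕ)) ↔ ((j:ℕ) ≤ (v a:ℕ) ∧ ¬ (a ≤ i)) := by
      intro a; tauto
    rw [Finset.filter_congr (fun a _ => e1 a), Finset.filter_congr (fun a _ => e2 a)]
    rw [← Finset.filter_filter, ← Finset.filter_filter]
    exact Finset.card_filter_add_card_filter_not _
  have hlow : ((univ : Finset (Fin (k+m))).filter fun a : Fin (k+m) =>
        max ((i:ℕ)+1) ((j:ℕ)+k) ≤ (a:ℕ)).card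
      ≤ ((univ : Finset (Fin (k+m))).filter fun a : Fin (k+m) =>
          ¬ (a ≤ i) ∧ (j:ℕ) ≤ (v a : ℕ)).card := by
    apply Finset.card_le_card
    intro a ha
    simp only [Finset.mem_filter, Finset.mem_univ, true_and] at *
    have h5 := (hb a).2
    rw [Fin.le_def]
    omega
  rw [card_filter_le_val] at hlow
  omega

include hw hb in
lemma le_of_band : BruhatLE v w := by
  intro i j
  rw [rank_w_eq hw]
  have h1 := boundU1 hb i j
  have h2 := boundU2 hb i j
  have h3 := boundU3 hb i j
  have h4 := boundU4 hb i j
  have hi := i.isLt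
  have hj := j.isLt
  omega

include hw in
lemma band_of_le (hle : BruhatLE v w) :
    ∀ a : Fin (k + m), (v a : ℕ) ≤ (a : ℕ) + m ∧ (a : ℕ) ≤ (v a : ℕ) + k := by
  by_contra hcon
  push_neg at hcon
  obtain ⟨a, hcase⟩ := hcon
  have ha := a.isLt
  have hva := (v a).isLt
  by_cases h1 : (a : ℕ) + m < (v a : ℕ)
  · -- first kind of violation
    have hr := hle a (v a)
    rw [rank_w_eq hw] at hr
    have hpos : 0 < bruhatRank v a (v a) := by
      unfold bruhatRank
      rw [Finset.card_pos]
      exact ⟨a, by simp⟩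
    omega
  · have h2 : (v a : ℕ) + k < (a : ℕ) := by
      rcases hcase (by omega) with h
      omega
    set I : Fin (k+m) := ⟨(a:ℕ) - 1, by omega⟩ with hI
    set J : Fin (k+m) := ⟨(v a:ℕ) + 1, by omega⟩ with hJ
    have hIv : (I : ℕ) = (a:ℕ) - 1 := rfl
    have hJv : (J : ℕ) = (v a:ℕ) + 1 := rfl
    have hr := hle I J
    rw [rank_w_eq hw] at hr
    rw [hIv, hJv] at hr
    have hrankv : (a:ℕ) - (v a:ℕ) ≤ bruhatRank v I J := by
      have hs := rank_split_le v I J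
      have hsmall : ((univ : Finset (Fin (k+m))).filter fun b : Fin (k+m) =>
          b ≤ I ∧ ((v b : ℕ) < (J : ℕ))).card ≤ (v a : ℕ) := by
        have : ((v a : ℕ)) = ((univ : Finset (Fin (k+m))).filter fun b : Fin (k+m) =>
            (b:ℕ) < (v a : ℕ)).card := by rw [card_filter_lt]; omega
        rw [this]
        apply Finset.card_le_card_of_injOn (fun b => v b)
        · intro b hbm
          simp only [Finset.mem_coe, Finset.mem_filter, Finset.mem_univ, true_and] at hbm ⊢
          obtain ⟨hb1, hb2⟩ := hbm
          rw [Fin.le_def, hIv] at hb1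
          have hne : v b ≠ v a := by
            intro he
            have : b = a := v.injective he
            subst this
            omega
          have : (v b : ℕ) ≠ (v a : ℕ) := fun he => hne (Fin.ext he)
          omega
        · intro x _ y _ hxy
          exact v.injective hxy
      rw [hIv] at hs
      omega
    omega

end BandEquiv

end CIA
namespace CIA
open Finset Equiv

lemma stirling2_succ (a k : ℕ) :
    stirling2 (a+1) k = (if k = 0 then 0 else stirling2 a (k-1)) + k * stirling2 a k := rfl

lemma stirling2_eq_zero : ∀ {a b : ℕ}, a < b → stirling2 a b = 0 := by
  intro a
  induction a with
  | zero => intro b h; match b, h with | b+1, _ => rfl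
  | succ a ih =>
    intro b h
    rw [stirling2_succ]
    have hb0 : b ≠ 0 := by omega
    rw [if_neg hb0, ih (show a < b - 1 by omega), ih (show a < b by omega)]
    simp

lemma stirling2_self : ∀ a, stirling2 a a = 1 := by
  intro a
  induction a with
  | zero => rfl
  | succ a ih =>
    rw [stirling2_succ, if_neg (Nat.succ_ne_zero a), Nat.add_sub_cancel, ih,
      stirling2_eq_zero (Nat.lt_succ_self a)]
    simp

lemma mem_Tboard {t : ℕ} {c : ℕ × ℕ} : c ∈ Tboard t ↔ c.1 + c.2 < t := by
  unfold Tboard grid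
  simp only [Finset.mem_filter, Finset.mem_product, Finset.mem_range]
  omega

lemma mem_rookConfigs {A : Board} {r : ℕ} {C : Board} :
    C ∈ rookConfigs A r ↔ C ⊆ A ∧ C.card = r ∧
      ∀ c ∈ C, ∀ c' ∈ C, c ≠ c' → c.1 ≠ c'.1 ∧ c.2 ≠ c'.2 := by
  unfold rookConfigs
  simp only [Finset.mem_filter, Finset.mem_powerset, and_assoc]

lemma na_row {C : Board} (hna : ∀ c ∈ C, ∀ c' ∈ C, c ≠ c' → c.1 ≠ c'.1 ∧ c.2 ≠ c'.2)
    {c c' : ℕ × ℕ} (h1 : c ∈ C) (h2 : c' ∈ C) (h : c.1 = c'.1) : c = c' := by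
  by_contra hne
  exact (hna c h1 c' h2 hne).1 h

lemma na_col {C : Board} (hna : ∀ c ∈ C, ∀ c' ∈ C, c ≠ c' → c.1 ≠ c'.1 ∧ c.2 ≠ c'.2)
    {c c' : ℕ × ℕ} (h1 : c ∈ C) (h2 : c' ∈ C) (h : c.2 = c'.2) : c = c' := by
  by_contra hne
  exact (hna c h1 c' h2 hne).2 h

lemma rookConfigs_zero (A : Board) : rookConfigs A 0 = {∅} := by
  ext C
  simp only [mem_rookConfigs, Finset.mem_singleton, Finset.card_eq_zero]
  constructor
  · rintro ⟨_, h, _⟩; exact h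
  · rintro rfl
    refine ⟨Finset.empty_subset _, rfl, ?_⟩
    intro c hc; exact absurd hc (Finset.notMem_empty c)

/-- number of elements of `range t` not used as an `f`-coordinate by `C`. -/
lemma card_unused (t : ℕ) (C : Board) (f : ℕ × ℕ → ℕ) (hlt : ∀ c ∈ C, f c < t)
    (hinj : ∀ c ∈ C, ∀ c' ∈ C, f c = f c' → c = c') :
    ((range t).filter fun j => ∀ c ∈ C, f c ≠ j).card = t - C.card := by
  have himg : (range t).filter (fun j => ¬ ∀ c ∈ C, f c ≠ j) = C.image f := by
    ext j
    simp only [Finset.mem_filter, Finset.mem_range, Finset.mem_image, not_forall]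
    constructor
    · rintro ⟨-, c, hc, hne⟩
      exact ⟨c, hc, by push_neg at hne; exact hne⟩
    · rintro ⟨c, hc, rfl⟩
      exact ⟨hlt c hc, c, hc, by simp⟩
  have hcc : (C.image f).card = C.card :=
    Finset.card_image_of_injOn (fun c hc c' hc' h => hinj c hc c' hc' h)
  have htot := Finset.card_filter_add_card_filter_not
    (s := range t) (p := fun j => ∀ c ∈ C, f c ≠ j)
  rw [himg, hcc, Finset.card_range] at htot
  have hle : C.card ≤ t := by
    rw [← hcc]
    have : C.image f ⊆ range t := by
      intro j hj
      obtain ⟨c, hc, rfl⟩ := Finset.mem_image.mp hj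
      exact Finset.mem_range.mpr (hlt c hc)
    exact le_trans (Finset.card_le_card this) (by simp)
  omega

def shiftUp (C : Board) : Board := C.image fun c => (c.1 + 1, c.2)

lemma mem_shiftUp {C : Board} {c : ℕ × ℕ} :
    c ∈ shiftUp C ↔ ∃ d ∈ C, c = (d.1 + 1, d.2) := by
  unfold shiftUp
  simp only [Finset.mem_image]
  constructor
  · rintro ⟨d, hd, rfl⟩; exact ⟨d, hd, rfl⟩
  · rintro ⟨d, hd, rfl⟩; exact ⟨d, hd, rfl⟩

lemma shiftUp_injective : Function.Injective shiftUp := by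
  apply Finset.image_injective
  intro c c' h
  have h1 := congrArg Prod.fst h
  have h2 := congrArg Prod.snd h
  simp only at h1 h2
  exact Prod.ext (by omega) h2

lemma card_shiftUp (C : Board) : (shiftUp C).card = C.card :=
  Finset.card_image_of_injOn (fun c _ c' _ h => by
    have h1 := congrArg Prod.fst h
    have h2 := congrArg Prod.snd h
    simp only at h1 h2
    exact Prod.ext (by omega) h2)

lemma zero_not_mem_shiftUp (C : Board) (j : ℕ) : (0, j) ∉ shiftUp C := by
  intro h
  obtain ⟨d, _, hd⟩ := mem_shiftUp.mp h
  exact absurd (congrArg Prod.fst hd) (by simp)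

end CIA
namespace CIA
open Finset Equiv

lemma shiftUp_shiftDown {D : Board} (h : ∀ c ∈ D, 1 ≤ c.1) :
    shiftUp (D.image fun c => (c.1 - 1, c.2)) = D := by
  unfold shiftUp
  rw [Finset.image_image]
  have : ∀ c ∈ D, ((fun c : ℕ × ℕ => (c.1 + 1, c.2)) ∘ (fun c : ℕ × ℕ => (c.1 - 1, c.2))) c = id c := by
    intro c hc
    have := h c hc
    simp only [Function.comp_apply, id_eq]
    exact Prod.ext (by omega) rfl
  rw [Finset.image_congr this, Finset.image_id]

lemma tri_step (t r : ℕ) :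
    (rookConfigs (Tboard (t+1)) (r+1)).card
      = (rookConfigs (Tboard t) (r+1)).card + (t+1-r) * (rookConfigs (Tboard t) r).card := by
  classical
  have hsplit := Finset.card_filter_add_card_filter_not
    (s := rookConfigs (Tboard (t+1)) (r+1)) (p := fun C => ∀ c ∈ C, c.1 ≠ 0)
  -- the configurations avoiding row 0 are shifts of configurations on the smaller board
  have claimA : (rookConfigs (Tboard (t+1)) (r+1)).filter (fun C => ∀ c ∈ C, c.1 ≠ 0)
      = (rookConfigs (Tboard t) (r+1)).image shiftUp := by
    ext C
    simp only [Finset.mem_filter, Finset.mem_image]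
    constructor
    · rintro ⟨hC, hrow⟩
      rw [mem_rookConfigs] at hC
      obtain ⟨hsub, hcard, hna⟩ := hC
      refine ⟨C.image fun c => (c.1 - 1, c.2), ?_, ?_⟩
      · rw [mem_rookConfigs]
        refine ⟨?_, ?_, ?_⟩
        · intro d hd
          obtain ⟨c, hc, rfl⟩ := Finset.mem_image.mp hd
          have h1 := mem_Tboard.mp (hsub hc)
          have h2 := hrow c hc
          rw [mem_Tboard]
          simp only
          omega
        · rw [← hcard]
          apply Finset.card_image_of_injOn
          intro c hc c' hc' h
          have h2 := congrArg Prod.snd h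
          simp only at h2
          exact na_col hna hc hc' h2
        · intro d hd d' hd' hne
          obtain ⟨c, hc, rfl⟩ := Finset.mem_image.mp hd
          obtain ⟨c', hc', rfl⟩ := Finset.mem_image.mp hd'
          constructor
          · intro h1
            simp only at h1
            have e1 := hrow c hc
            have e2 := hrow c' hc'
            have : c.1 = c'.1 := by omega
            exact hne (by rw [na_row hna hc hc' this])
          · intro h2
            simp only at h2
            exact hne (by rw [na_col hna hc hc' h2])
      · exact shiftUp_shiftDown (fun c hc => by have := hrow c hc; omega)
    · rintro ⟨C', hC', rfl⟩
      rw [mem_rookConfigs] at hC'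
      obtain ⟨hsub, hcard, hna⟩ := hC'
      have hmem : ∀ c ∈ shiftUp C', c.1 ≠ 0 := by
        intro c hc
        obtain ⟨d, _, rfl⟩ := mem_shiftUp.mp hc
        simp
      refine ⟨?_, hmem⟩
      rw [mem_rookConfigs]
      refine ⟨?_, by rw [card_shiftUp]; exact hcard, ?_⟩
      · intro c hc
        obtain ⟨d, hd, rfl⟩ := mem_shiftUp.mp hc
        have := mem_Tboard.mp (hsub hd)
        rw [mem_Tboard]
        simp only
        omega
      · intro c hc c' hc' hne
        obtain ⟨d, hd, rfl⟩ := mem_shiftUp.mp hc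
        obtain ⟨d', hd', rfl⟩ := mem_shiftUp.mp hc'
        have hdd : d ≠ d' := fun h => hne (by rw [h])
        have := hna d hd d' hd' hdd
        constructor
        · simp only; omega
        · simp only; exact this.2
  -- the configurations with a rook in row 0
  have claimB : (rookConfigs (Tboard (t+1)) (r+1)).filter (fun C => ¬ ∀ c ∈ C, c.1 ≠ 0)
      = (rookConfigs (Tboard t) r).biUnion (fun C' =>
          ((range (t+1)).filter (fun j => ∀ c ∈ C', c.2 ≠ j)).image
            (fun j => insert (0, j) (shiftUp C'))) := by
    ext C
    simp only [Finset.mem_filter, Finset.mem_biUnion, Finset.mem_image, not_forall]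
    constructor
    · rintro ⟨hC, c₀, hc₀, hc₀0⟩
      push_neg at hc₀0
      rw [mem_rookConfigs] at hC
      obtain ⟨hsub, hcard, hna⟩ := hC
      have hc01 : c₀.1 = 0 := by omega
      set Cf := C.filter (fun c => c.1 ≠ 0) with hCf
      have hCferase : Cf = C.erase c₀ := by
        ext c
        simp only [hCf, Finset.mem_filter, Finset.mem_erase]
        constructor
        · rintro ⟨hc, hc1⟩
          refine ⟨?_, hc⟩
          intro h; subst h; exact hc1 hc01
        · rintro ⟨hcne, hc⟩
          refine ⟨hc, ?_⟩
          intro h0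
          exact hcne (na_row hna hc hc₀ (by omega))
      have hCfcard : Cf.card = r := by
        rw [hCferase, Finset.card_erase_of_mem hc₀, hcard]
        omega
      have hrows : ∀ c ∈ Cf, 1 ≤ c.1 := by
        intro c hc
        rw [hCf, Finset.mem_filter] at hc
        omega
      refine ⟨Cf.image fun c => (c.1 - 1, c.2), ?_, c₀.2, ?_, ?_⟩
      · rw [mem_rookConfigs]
        refine ⟨?_, ?_, ?_⟩
        · intro d hd
          obtain ⟨c, hc, rfl⟩ := Finset.mem_image.mp hd
          have h1 := mem_Tboard.mp (hsub (Finset.mem_of_mem_filter c hc))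
          have h2 := hrows c hc
          rw [mem_Tboard]; simp only; omega
        · rw [← hCfcard]
          apply Finset.card_image_of_injOn
          intro c hc c' hc' h
          have h2 := congrArg Prod.snd h
          simp only at h2
          exact na_col hna (Finset.mem_of_mem_filter c hc) (Finset.mem_of_mem_filter c' hc') h2
        · intro d hd d' hd' hne
          obtain ⟨c, hc, rfl⟩ := Finset.mem_image.mp hd
          obtain ⟨c', hc', rfl⟩ := Finset.mem_image.mp hd'
          have hcC := Finset.mem_of_mem_filter c hc
          have hcC' := Finset.mem_of_mem_filter c' hc'
          constructor
          · intro h1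
            simp only at h1
            have e1 := hrows c hc
            have e2 := hrows c' hc'
            have : c.1 = c'.1 := by omega
            exact hne (by rw [na_row hna hcC hcC' this])
          · intro h2
            simp only at h2
            exact hne (by rw [na_col hna hcC hcC' h2])
      · simp only [Finset.mem_filter, Finset.mem_range]
        constructor
        · have := mem_Tboard.mp (hsub hc₀); omega
        · intro d hd
          obtain ⟨c, hc, rfl⟩ := Finset.mem_image.mp hd
          simp only
          intro h2
          have hcC := Finset.mem_of_mem_filter c hc
          have : c = c₀ := na_col hna hcC hc₀ h2
          subst this
          exact absurd hc01 (by have := hrows c hc; omega)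
      · rw [shiftUp_shiftDown hrows, hCferase]
        have hc0eq : ((0:ℕ), c₀.2) = c₀ := Prod.ext hc01.symm rfl
        rw [hc0eq, Finset.insert_erase hc₀]
    · rintro ⟨C', hC', j, hj, rfl⟩
      simp only [Finset.mem_filter, Finset.mem_range] at hj
      obtain ⟨hjt, hjfree⟩ := hj
      rw [mem_rookConfigs] at hC'
      obtain ⟨hsub, hcard, hna⟩ := hC'
      have hnotmem := zero_not_mem_shiftUp C' j
      constructor
      · rw [mem_rookConfigs]
        refine ⟨?_, ?_, ?_⟩
        · intro c hc
          rcases Finset.mem_insert.mp hc with h | h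
          · subst h; rw [mem_Tboard]; simpa using hjt
          · obtain ⟨d, hd, rfl⟩ := mem_shiftUp.mp h
            have := mem_Tboard.mp (hsub hd)
            rw [mem_Tboard]; simp only; omega
        · rw [Finset.card_insert_of_notMem hnotmem, card_shiftUp, hcard]
        · intro c hc c' hc' hne
          rcases Finset.mem_insert.mp hc with h | h <;>
            rcases Finset.mem_insert.mp hc' with h' | h'
          · exact absurd (h.trans h'.symm) hne
          · subst h
            obtain ⟨d, hd, rfl⟩ := mem_shiftUp.mp h'
            exact ⟨by simp, by simpa using fun hh => (hjfree d hd) hh.symm⟩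
          · subst h'
            obtain ⟨d, hd, rfl⟩ := mem_shiftUp.mp h
            exact ⟨by simp, by simpa using hjfree d hd⟩
          · obtain ⟨d, hd, rfl⟩ := mem_shiftUp.mp h
            obtain ⟨d', hd', rfl⟩ := mem_shiftUp.mp h'
            have hdd : d ≠ d' := fun hh => hne (by rw [hh])
            have := hna d hd d' hd' hdd
            exact ⟨by simp only; omega, by simp only; exact this.2⟩
      · exact ⟨(0, j), Finset.mem_insert_self _ _, by simp⟩
  rw [claimA, claimB] at hsplit
  rw [Finset.card_image_of_injective _ shiftUp_injective] at hsplit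
  rw [Finset.card_biUnion] at hsplit
  · have hsum : ∀ C' ∈ rookConfigs (Tboard t) r,
        (((range (t+1)).filter (fun j => ∀ c ∈ C', c.2 ≠ j)).image
          (fun j => insert (0, j) (shiftUp C'))).card = t + 1 - r := by
      intro C' hC'
      rw [mem_rookConfigs] at hC'
      obtain ⟨hsub, hcard, hna⟩ := hC'
      rw [Finset.card_image_of_injOn]
      · rw [card_unused (t+1) C' Prod.snd
          (fun c hc => by have := mem_Tboard.mp (hsub hc); omega)
          (fun c hc c' hc' h => na_col hna hc hc' h), hcard]
      · intro j₁ h₁ j₂ h₂ heq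
        have heq' : insert ((0:ℕ), j₁) (shiftUp C') = insert ((0:ℕ), j₂) (shiftUp C') := heq
        have hm : ((0:ℕ), j₁) ∈ insert ((0 : ℕ), j₂) (shiftUp C') := by
          rw [← heq']; exact Finset.mem_insert_self _ _
        rcases Finset.mem_insert.mp hm with h | h
        · exact (Prod.ext_iff.mp h).2
        · exact absurd h (zero_not_mem_shiftUp C' j₁)
    rw [Finset.sum_congr rfl hsum, Finset.sum_const, smul_eq_mul, Nat.mul_comm] at hsplit
    omega
  · intro C₁ h₁ C₂ h₂ hne
    simp only [Finset.disjoint_left]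
    intro C hCm1 hCm2
    obtain ⟨j₁, hj₁, rfl⟩ := Finset.mem_image.mp hCm1
    obtain ⟨j₂, hj₂, heq⟩ := Finset.mem_image.mp hCm2
    apply hne
    have hfilt : ∀ (j : ℕ) (D : Board),
        (insert ((0:ℕ), j) (shiftUp D)).filter (fun c => c.1 ≠ 0) = shiftUp D := by
      intro j D
      ext c
      simp only [Finset.mem_filter, Finset.mem_insert]
      constructor
      · rintro ⟨h | h, hc0⟩
        · exact absurd (congrArg Prod.fst h) (by simpa using hc0)
        · exact h
      · intro h
        obtain ⟨d, _, rfl⟩ := mem_shiftUp.mp h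
        exact ⟨Or.inr h, by simp⟩
    have := congrArg (fun D => D.filter (fun c : ℕ × ℕ => c.1 ≠ 0)) heq
    simp only [hfilt] at this
    exact (shiftUp_injective this).symm

theorem tri_card : ∀ t r : ℕ, (rookConfigs (Tboard t) r).card = stirling2 (t+1) (t+1-r) := by
  intro t
  induction t with
  | zero =>
    intro r
    have hT : Tboard 0 = ∅ := rfl
    cases r with
    | zero => rw [hT, rookConfigs_zero]; simp [stirling2_self]
    | succ r =>
      rw [hT]
      have hemp : rookConfigs (∅ : Board) (r+1) = ∅ := by
        ext C
        simp only [mem_rookConfigs, Finset.notMem_empty, iff_false, not_and]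
        intro hsub hcard
        have : C = ∅ := Finset.subset_empty.mp hsub
        subst this
        simp at hcard
      rw [hemp]
      have e : 0 + 1 - (r+1) = 0 := by omega
      rw [e]
      simp [stirling2_succ]
  | succ t ih =>
    intro r
    cases r with
    | zero =>
      rw [rookConfigs_zero]
      simp [stirling2_self]
    | succ r =>
      rw [tri_step, ih, ih]
      by_cases hrt : r ≤ t
      · have e1 : t + 1 - (r+1) = t - r := by omega
        have e2 : t + 1 + 1 - (r + 1) = t + 1 - r := by omega
        rw [e1, e2, stirling2_succ (t+1) (t+1-r), if_neg (show t + 1 - r ≠ 0 by omega)]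
        have e3 : t + 1 - r - 1 = t - r := by omega
        rw [e3]
      · have e1 : t + 1 - (r+1) = 0 := by omega
        have e2 : t + 1 + 1 - (r + 1) = 0 := by omega
        have e3 : t + 1 - r = 0 := by omega
        rw [e1, e2, e3]
        simp [stirling2_succ]

end CIA
namespace CIA
open Finset Equiv

variable {k m : ℕ}

/-- the top-right rook configuration of a permutation, in triangle coordinates. -/
def Pv (k m : ℕ) (v : Perm (Fin (k+m))) : Board :=
  ((univ : Finset (Fin (k+m))).filter fun a : Fin (k+m) => (a:ℕ) < k ∧ m ≤ (v a:ℕ)).image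
    (fun a : Fin (k+m) => (k - 1 - (a:ℕ), (v a:ℕ) - m))

/-- the bottom-left rook configuration of a permutation, in triangle coordinates. -/
def Qv (k m : ℕ) (v : Perm (Fin (k+m))) : Board :=
  ((univ : Finset (Fin (k+m))).filter fun a : Fin (k+m) => k ≤ (a:ℕ) ∧ (v a:ℕ) < m).image
    (fun a : Fin (k+m) => ((a:ℕ) - k, m - 1 - (v a:ℕ)))

def statL (k m : ℕ) (v : Perm (Fin (k+m))) : ℕ :=
  ((univ : Finset (Fin (k+m))).filter fun a : Fin (k+m) => (a:ℕ) < k ∧ (v a:ℕ) < m).card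

def bandSet (k m : ℕ) : Finset (Perm (Fin (k+m))) :=
  univ.filter fun v => ∀ a : Fin (k+m), (v a : ℕ) ≤ (a : ℕ) + m ∧ (a : ℕ) ≤ (v a : ℕ) + k

lemma mem_Pv {v : Perm (Fin (k+m))} {c : ℕ × ℕ} :
    c ∈ Pv k m v ↔ ∃ a : Fin (k+m), (a:ℕ) < k ∧ m ≤ (v a:ℕ) ∧ c = (k - 1 - (a:ℕ), (v a:ℕ) - m) := by
  unfold Pv
  simp only [Finset.mem_image, Finset.mem_filter, Finset.mem_univ, true_and]
  constructor
  · rintro ⟨a, ⟨h1, h2⟩, rfl⟩; exact ⟨a, h1, h2, rfl⟩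
  · rintro ⟨a, h1, h2, rfl⟩; exact ⟨a, ⟨h1, h2⟩, rfl⟩

lemma mem_Qv {v : Perm (Fin (k+m))} {c : ℕ × ℕ} :
    c ∈ Qv k m v ↔ ∃ a : Fin (k+m), k ≤ (a:ℕ) ∧ (v a:ℕ) < m ∧ c = ((a:ℕ) - k, m - 1 - (v a:ℕ)) := by
  unfold Qv
  simp only [Finset.mem_image, Finset.mem_filter, Finset.mem_univ, true_and]
  constructor
  · rintro ⟨a, ⟨h1, h2⟩, rfl⟩; exact ⟨a, h1, h2, rfl⟩
  · rintro ⟨a, h1, h2, rfl⟩; exact ⟨a, ⟨h1, h2⟩, rfl⟩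

lemma statL_le_k (v : Perm (Fin (k+m))) : statL k m v ≤ k := by
  unfold statL
  have h := Finset.card_le_card (s := (univ : Finset (Fin (k+m))).filter fun a : Fin (k+m) => (a:ℕ) < k ∧ (v a:ℕ) < m)
    (t := (univ : Finset (Fin (k+m))).filter fun a : Fin (k+m) => (a:ℕ) < k) ?_
  · rw [card_filter_lt] at h; omega
  · intro a ha
    simp only [Finset.mem_filter, Finset.mem_univ, true_and] at *
    exact ha.1

lemma card_filter_vlt (v : Perm (Fin (k+m))) :
    ((univ : Finset (Fin (k+m))).filter fun a : Fin (k+m) => (v a:ℕ) < m).card = m := by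
  have h : ((univ : Finset (Fin (k+m))).filter fun a : Fin (k+m) => (v a:ℕ) < m).card
      = ((univ : Finset (Fin (k+m))).filter fun b : Fin (k+m) => (b:ℕ) < m).card := by
    apply Finset.card_nbij' (i := fun a => v a) (j := fun b => v.symm b)
    · intro a ha; simp only [Finset.mem_coe, Finset.mem_filter, Finset.mem_univ, true_and] at *; exact ha
    · intro b hb; simp only [Finset.mem_coe, Finset.mem_filter, Finset.mem_univ, true_and] at *
      rw [Equiv.apply_symm_apply]; exact hb
    · intro a _; simp
    · intro b _; simp
  rw [h, card_filter_lt]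
  omega

lemma statL_le_m (v : Perm (Fin (k+m))) : statL k m v ≤ m := by
  unfold statL
  have hsub : ((univ : Finset (Fin (k+m))).filter fun a : Fin (k+m) => (a:ℕ) < k ∧ (v a:ℕ) < m)
      ⊆ ((univ : Finset (Fin (k+m))).filter fun a : Fin (k+m) => (v a:ℕ) < m) := by
    intro a ha
    simp only [Finset.mem_filter, Finset.mem_univ, true_and] at *
    exact ha.2
  have h := Finset.card_le_card hsub
  rwa [card_filter_vlt] at h

lemma card_topfilter : ((univ : Finset (Fin (k+m))).filter fun a : Fin (k+m) => (a:ℕ) < k).card = k := by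
  rw [card_filter_lt]; omega

lemma Pv_card (v : Perm (Fin (k+m))) : (Pv k m v).card = k - statL k m v := by
  unfold Pv
  rw [Finset.card_image_of_injOn]
  · have hsplit := Finset.card_filter_add_card_filter_not
      (s := (univ : Finset (Fin (k+m))).filter fun a : Fin (k+m) => (a:ℕ) < k) (p := fun a => (v a:ℕ) < m)
    rw [Finset.filter_filter, Finset.filter_filter, card_topfilter] at hsplit
    have e1 : ((univ : Finset (Fin (k+m))).filter fun a : Fin (k+m) => (a:ℕ) < k ∧ (v a:ℕ) < m).card = statL k m v := rfl
    have e2 : ((univ : Finset (Fin (k+m))).filter fun a : Fin (k+m) => (a:ℕ) < k ∧ ¬ (v a:ℕ) < m)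
        = ((univ : Finset (Fin (k+m))).filter fun a : Fin (k+m) => (a:ℕ) < k ∧ m ≤ (v a:ℕ)) := by
      apply Finset.filter_congr; intro a _; constructor <;> (intro h; exact ⟨h.1, by omega⟩)
    rw [e1, e2] at hsplit
    omega
  · intro a ha b hb h
    simp only [Finset.mem_coe, Finset.mem_filter, Finset.mem_univ, true_and] at ha hb
    have h1 := congrArg Prod.fst h
    simp only at h1
    exact Fin.ext (by omega)

lemma Qv_card (v : Perm (Fin (k+m))) : (Qv k m v).card = m - statL k m v := by
  unfold Qv
  rw [Finset.card_image_of_injOn]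
  · have hsplit := Finset.card_filter_add_card_filter_not
      (s := (univ : Finset (Fin (k+m))).filter fun a : Fin (k+m) => (v a:ℕ) < m) (p := fun a => (a:ℕ) < k)
    rw [Finset.filter_filter, Finset.filter_filter, card_filter_vlt] at hsplit
    have e1 : ((univ : Finset (Fin (k+m))).filter fun a : Fin (k+m) => (v a:ℕ) < m ∧ (a:ℕ) < k).card
        = statL k m v := by
      unfold statL
      apply congrArg
      apply Finset.filter_congr; intro a _; tauto
    have e2 : ((univ : Finset (Fin (k+m))).filter fun a : Fin (k+m) => (v a:ℕ) < m ∧ ¬ (a:ℕ) < k)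
        = ((univ : Finset (Fin (k+m))).filter fun a : Fin (k+m) => k ≤ (a:ℕ) ∧ (v a:ℕ) < m) := by
      apply Finset.filter_congr; intro a _; constructor <;> (intro h; constructor <;> omega)
    rw [e1, e2] at hsplit
    omega
  · intro a ha b hb h
    simp only [Finset.mem_coe, Finset.mem_filter, Finset.mem_univ, true_and] at ha hb
    have h1 := congrArg Prod.fst h
    simp only at h1
    exact Fin.ext (by omega)

lemma Pv_mem {v : Perm (Fin (k+m))} (hv : v ∈ bandSet k m) :
    Pv k m v ∈ rookConfigs (Tboard k) (k - statL k m v) := by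
  rw [bandSet, Finset.mem_filter] at hv
  have hb := hv.2
  rw [mem_rookConfigs]
  refine ⟨?_, Pv_card v, ?_⟩
  · intro c hc
    obtain ⟨a, h1, h2, rfl⟩ := mem_Pv.mp hc
    have := (hb a).1
    rw [mem_Tboard]
    simp only
    omega
  · intro c hc c' hc' hne
    obtain ⟨a, h1, h2, rfl⟩ := mem_Pv.mp hc
    obtain ⟨a', h1', h2', rfl⟩ := mem_Pv.mp hc'
    have hanene : (a:ℕ) ≠ (a':ℕ) := by
      intro h; exact hne (by rw [Fin.ext h])
    constructor
    · simp only; omega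
    · simp only
      intro h
      have : (v a : ℕ) = (v a' : ℕ) := by omega
      exact hanene (congrArg Fin.val (v.injective (Fin.ext this)))

lemma Qv_mem {v : Perm (Fin (k+m))} (hv : v ∈ bandSet k m) :
    Qv k m v ∈ rookConfigs (Tboard m) (m - statL k m v) := by
  rw [bandSet, Finset.mem_filter] at hv
  have hb := hv.2
  rw [mem_rookConfigs]
  refine ⟨?_, Qv_card v, ?_⟩
  · intro c hc
    obtain ⟨a, h1, h2, rfl⟩ := mem_Qv.mp hc
    have := (hb a).2
    rw [mem_Tboard]
    simp only
    omega
  · intro c hc c' hc' hne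
    obtain ⟨a, h1, h2, rfl⟩ := mem_Qv.mp hc
    obtain ⟨a', h1', h2', rfl⟩ := mem_Qv.mp hc'
    have hanene : (a:ℕ) ≠ (a':ℕ) := by
      intro h; exact hne (by rw [Fin.ext h])
    constructor
    · simp only; omega
    · simp only
      intro h
      have : (v a : ℕ) = (v a' : ℕ) := by omega
      exact hanene (congrArg Fin.val (v.injective (Fin.ext this)))

end CIA
namespace CIA
open Finset Equiv

variable {k m : ℕ}

def ARs (k : ℕ) (P : Board) : Finset ℕ := (range k).filter fun x => ∀ c ∈ P, c.1 ≠ x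
def RCs (k : ℕ) (P : Board) : Finset ℕ := (range k).filter fun y => ∀ c ∈ P, c.2 ≠ y
def BRs (m : ℕ) (Q : Board) : Finset ℕ := (range m).filter fun x => ∀ c ∈ Q, c.1 ≠ x
def JCs (m : ℕ) (Q : Board) : Finset ℕ := (range m).filter fun y => ∀ c ∈ Q, c.2 ≠ y

lemma ARs_card {i : ℕ} {P : Board} (hP : P ∈ rookConfigs (Tboard k) (k-i)) (hik : i ≤ k) :
    (ARs k P).card = i := by
  rw [mem_rookConfigs] at hP
  obtain ⟨hs, hc, hna⟩ := hP
  have h := card_unused k P Prod.fst (fun c hcm => by have := mem_Tboard.mp (hs hcm); omega)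
    (fun c h c' h' e => na_row hna h h' e)
  unfold ARs
  rw [h, hc]
  omega

lemma RCs_card {i : ℕ} {P : Board} (hP : P ∈ rookConfigs (Tboard k) (k-i)) (hik : i ≤ k) :
    (RCs k P).card = i := by
  rw [mem_rookConfigs] at hP
  obtain ⟨hs, hc, hna⟩ := hP
  have h := card_unused k P Prod.snd (fun c hcm => by have := mem_Tboard.mp (hs hcm); omega)
    (fun c h c' h' e => na_col hna h h' e)
  unfold RCs
  rw [h, hc]
  omega

lemma BRs_card {i : ℕ} {Q : Board} (hQ : Q ∈ rookConfigs (Tboard m) (m-i)) (him : i ≤ m) :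
    (BRs m Q).card = i := ARs_card hQ him

lemma JCs_card {i : ℕ} {Q : Board} (hQ : Q ∈ rookConfigs (Tboard m) (m-i)) (him : i ≤ m) :
    (JCs m Q).card = i := RCs_card hQ him

section Dec

variable (k m : ℕ) (P Q : Board) (hsubP : P ⊆ Tboard k) (hsubQ : Q ⊆ Tboard m)
variable (e₁ : ↥(ARs k P) ≃ ↥(JCs m Q)) (e₂ : ↥(BRs m Q) ≃ ↥(RCs k P))

noncomputable def decFun : Fin (k+m) → Fin (k+m) := fun a =>
  if h : (a:ℕ) < k then
    if hp : ∃ c ∈ P, c.1 = k - 1 - (a:ℕ) then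
      ⟨min (m + hp.choose.2) (k+m-1), by have := a.pos; omega⟩
    else
      ⟨m - 1 - ((e₁ ⟨k - 1 - (a:ℕ), by
          unfold ARs
          rw [Finset.mem_filter, Finset.mem_range]
          push_neg at hp
          exact ⟨by omega, fun c hc => hp c hc⟩⟩ : ℕ)), by have := a.pos; omega⟩
  else
    if hq : ∃ c ∈ Q, c.1 = (a:ℕ) - k then
      ⟨m - 1 - hq.choose.2, by have := a.pos; omega⟩
    else
      ⟨min (m + ((e₂ ⟨(a:ℕ) - k, by
          unfold BRs
          rw [Finset.mem_filter, Finset.mem_range]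
          push_neg at hq
          exact ⟨by have := a.isLt; omega, fun c hc => hq c hc⟩⟩ : ℕ))) (k+m-1), by have := a.pos; omega⟩

variable {k m P Q}

include hsubP in
lemma decFun_val1 (a : Fin (k+m)) (h : (a:ℕ) < k) (hp : ∃ c ∈ P, c.1 = k - 1 - (a:ℕ)) :
    (decFun k m P Q e₁ e₂ a : ℕ) = m + hp.choose.2 := by
  unfold decFun
  rw [dif_pos h, dif_pos hp]
  have := mem_Tboard.mp (hsubP hp.choose_spec.1)
  have := a.isLt
  simp only [Fin.val_mk]
  omega

lemma decFun_val2 (a : Fin (k+m)) (h : (a:ℕ) < k) (hp : ¬ ∃ c ∈ P, c.1 = k - 1 - (a:ℕ))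
    (hmem : k - 1 - (a:ℕ) ∈ ARs k P) :
    (decFun k m P Q e₁ e₂ a : ℕ) = m - 1 - ((e₁ ⟨k - 1 - (a:ℕ), hmem⟩ : ℕ)) := by
  unfold decFun
  rw [dif_pos h, dif_neg hp]

lemma decFun_val3 (a : Fin (k+m)) (h : ¬ (a:ℕ) < k) (hq : ∃ c ∈ Q, c.1 = (a:ℕ) - k) :
    (decFun k m P Q e₁ e₂ a : ℕ) = m - 1 - hq.choose.2 := by
  unfold decFun
  rw [dif_neg h, dif_pos hq]

lemma decFun_val4 (a : Fin (k+m)) (h : ¬ (a:ℕ) < k) (hq : ¬ ∃ c ∈ Q, c.1 = (a:ℕ) - k)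
    (hmem : (a:ℕ) - k ∈ BRs m Q) :
    (decFun k m P Q e₁ e₂ a : ℕ) = m + ((e₂ ⟨(a:ℕ) - k, hmem⟩ : ℕ)) := by
  unfold decFun
  rw [dif_neg h, dif_neg hq]
  have hy := (e₂ ⟨(a:ℕ) - k, hmem⟩).2
  unfold RCs at hy
  rw [Finset.mem_filter, Finset.mem_range] at hy
  simp only [Fin.val_mk]
  omega

end Dec

end CIA
namespace CIA
open Finset Equiv

section Dec2

variable {k m : ℕ} {P Q : Board}
variable (hsubP : P ⊆ Tboard k) (hnaP : ∀ c ∈ P, ∀ c' ∈ P, c ≠ c' → c.1 ≠ c'.1 ∧ c.2 ≠ c'.2)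
variable (hsubQ : Q ⊆ Tboard m) (hnaQ : ∀ c ∈ Q, ∀ c' ∈ Q, c ≠ c' → c.1 ≠ c'.1 ∧ c.2 ≠ c'.2)
variable (e₁ : ↥(ARs k P) ≃ ↥(JCs m Q)) (e₂ : ↥(BRs m Q) ≃ ↥(RCs k P))

lemma mem_ARs_of_not (a : Fin (k+m)) (h : (a:ℕ) < k)
    (hp : ¬ ∃ c ∈ P, c.1 = k - 1 - (a:ℕ)) : k - 1 - (a:ℕ) ∈ ARs k P := by
  unfold ARs
  rw [Finset.mem_filter, Finset.mem_range]
  push_neg at hp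
  exact ⟨by omega, fun c hc => hp c hc⟩

lemma mem_BRs_of_not (a : Fin (k+m)) (h : ¬ (a:ℕ) < k)
    (hq : ¬ ∃ c ∈ Q, c.1 = (a:ℕ) - k) : (a:ℕ) - k ∈ BRs m Q := by
  unfold BRs
  rw [Finset.mem_filter, Finset.mem_range]
  push_neg at hq
  exact ⟨by have := a.isLt; omega, fun c hc => hq c hc⟩

lemma e1_val_lt (x : ↥(ARs k P)) : ((e₁ x : ℕ)) < m := by
  have := (e₁ x).2
  unfold JCs at this
  rw [Finset.mem_filter, Finset.mem_range] at this
  exact this.1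

lemma e1_val_free (x : ↥(ARs k P)) : ∀ c ∈ Q, c.2 ≠ ((e₁ x : ℕ)) := by
  have := (e₁ x).2
  unfold JCs at this
  rw [Finset.mem_filter, Finset.mem_range] at this
  exact this.2

lemma e2_val_lt (x : ↥(BRs m Q)) : ((e₂ x : ℕ)) < k := by
  have := (e₂ x).2
  unfold RCs at this
  rw [Finset.mem_filter, Finset.mem_range] at this
  exact this.1

lemma e2_val_free (x : ↥(BRs m Q)) : ∀ c ∈ P, c.2 ≠ ((e₂ x : ℕ)) := by
  have := (e₂ x).2
  unfold RCs at this
  rw [Finset.mem_filter, Finset.mem_range] at this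
  exact this.2

include hsubP hnaP hsubQ hnaQ in
lemma decFun_inj : Function.Injective (decFun k m P Q e₁ e₂) := by
  intro a b hab
  have hval := congrArg Fin.val hab
  by_cases ha : (a:ℕ) < k <;> by_cases hb : (b:ℕ) < k
  · -- both top
    by_cases hpa : ∃ c ∈ P, c.1 = k - 1 - (a:ℕ) <;>
      by_cases hpb : ∃ c ∈ P, c.1 = k - 1 - (b:ℕ)
    · rw [decFun_val1 hsubP e₁ e₂ a ha hpa, decFun_val1 hsubP e₁ e₂ b hb hpb] at hval
      have hca := hpa.choose_spec
      have hcb := hpb.choose_spec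
      have : hpa.choose = hpb.choose := na_col hnaP hca.1 hcb.1 (by omega)
      have hrow : k - 1 - (a:ℕ) = k - 1 - (b:ℕ) := by
        rw [← hca.2, ← hcb.2, this]
      exact Fin.ext (by omega)
    · rw [decFun_val1 hsubP e₁ e₂ a ha hpa,
        decFun_val2 e₁ e₂ b hb hpb (mem_ARs_of_not b hb hpb)] at hval
      have h1 := e1_val_lt e₁ ⟨k - 1 - (b:ℕ), mem_ARs_of_not b hb hpb⟩
      omega
    · rw [decFun_val2 e₁ e₂ a ha hpa (mem_ARs_of_not a ha hpa),
        decFun_val1 hsubP e₁ e₂ b hb hpb] at hval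
      have h1 := e1_val_lt e₁ ⟨k - 1 - (a:ℕ), mem_ARs_of_not a ha hpa⟩
      omega
    · rw [decFun_val2 e₁ e₂ a ha hpa (mem_ARs_of_not a ha hpa),
        decFun_val2 e₁ e₂ b hb hpb (mem_ARs_of_not b hb hpb)] at hval
      have h1 := e1_val_lt e₁ ⟨k - 1 - (a:ℕ), mem_ARs_of_not a ha hpa⟩
      have h2 := e1_val_lt e₁ ⟨k - 1 - (b:ℕ), mem_ARs_of_not b hb hpb⟩
      have hy : ((e₁ ⟨k - 1 - (a:ℕ), mem_ARs_of_not a ha hpa⟩ : ℕ))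
          = ((e₁ ⟨k - 1 - (b:ℕ), mem_ARs_of_not b hb hpb⟩ : ℕ)) := by omega
      have := e₁.injective (Subtype.ext hy)
      have := congrArg Subtype.val this
      simp only at this
      exact Fin.ext (by omega)
  · -- a top, b bottom
    by_cases hpa : ∃ c ∈ P, c.1 = k - 1 - (a:ℕ) <;>
      by_cases hqb : ∃ c ∈ Q, c.1 = (b:ℕ) - k
    · rw [decFun_val1 hsubP e₁ e₂ a ha hpa, decFun_val3 e₁ e₂ b hb hqb] at hval
      have := mem_Tboard.mp (hsubQ hqb.choose_spec.1)
      omega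
    · rw [decFun_val1 hsubP e₁ e₂ a ha hpa,
        decFun_val4 e₁ e₂ b hb hqb (mem_BRs_of_not b hb hqb)] at hval
      have hfree := e2_val_free e₂ ⟨(b:ℕ) - k, mem_BRs_of_not b hb hqb⟩ hpa.choose hpa.choose_spec.1
      omega
    · rw [decFun_val2 e₁ e₂ a ha hpa (mem_ARs_of_not a ha hpa),
        decFun_val3 e₁ e₂ b hb hqb] at hval
      have h1 := e1_val_lt e₁ ⟨k - 1 - (a:ℕ), mem_ARs_of_not a ha hpa⟩
      have h2 := mem_Tboard.mp (hsubQ hqb.choose_spec.1)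
      have hfree := e1_val_free e₁ ⟨k - 1 - (a:ℕ), mem_ARs_of_not a ha hpa⟩
        hqb.choose hqb.choose_spec.1
      omega
    · rw [decFun_val2 e₁ e₂ a ha hpa (mem_ARs_of_not a ha hpa),
        decFun_val4 e₁ e₂ b hb hqb (mem_BRs_of_not b hb hqb)] at hval
      have h1 := e1_val_lt e₁ ⟨k - 1 - (a:ℕ), mem_ARs_of_not a ha hpa⟩
      omega
  · -- a bottom, b top
    by_cases hqa : ∃ c ∈ Q, c.1 = (a:ℕ) - k <;>
      by_cases hpb : ∃ c ∈ P, c.1 = k - 1 - (b:ℕ)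
    · rw [decFun_val3 e₁ e₂ a ha hqa, decFun_val1 hsubP e₁ e₂ b hb hpb] at hval
      have := mem_Tboard.mp (hsubQ hqa.choose_spec.1)
      omega
    · rw [decFun_val3 e₁ e₂ a ha hqa,
        decFun_val2 e₁ e₂ b hb hpb (mem_ARs_of_not b hb hpb)] at hval
      have h1 := e1_val_lt e₁ ⟨k - 1 - (b:ℕ), mem_ARs_of_not b hb hpb⟩
      have h2 := mem_Tboard.mp (hsubQ hqa.choose_spec.1)
      have hfree := e1_val_free e₁ ⟨k - 1 - (b:ℕ), mem_ARs_of_not b hb hpb⟩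
        hqa.choose hqa.choose_spec.1
      omega
    · rw [decFun_val4 e₁ e₂ a ha hqa (mem_BRs_of_not a ha hqa),
        decFun_val1 hsubP e₁ e₂ b hb hpb] at hval
      have hfree := e2_val_free e₂ ⟨(a:ℕ) - k, mem_BRs_of_not a ha hqa⟩ hpb.choose hpb.choose_spec.1
      omega
    · rw [decFun_val4 e₁ e₂ a ha hqa (mem_BRs_of_not a ha hqa),
        decFun_val2 e₁ e₂ b hb hpb (mem_ARs_of_not b hb hpb)] at hval
      have h1 := e1_val_lt e₁ ⟨k - 1 - (b:ℕ), mem_ARs_of_not b hb hpb⟩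
      omega
  · -- both bottom
    by_cases hqa : ∃ c ∈ Q, c.1 = (a:ℕ) - k <;>
      by_cases hqb : ∃ c ∈ Q, c.1 = (b:ℕ) - k
    · rw [decFun_val3 e₁ e₂ a ha hqa, decFun_val3 e₁ e₂ b hb hqb] at hval
      have hca := hqa.choose_spec
      have hcb := hqb.choose_spec
      have h2a := mem_Tboard.mp (hsubQ hca.1)
      have h2b := mem_Tboard.mp (hsubQ hcb.1)
      have : hqa.choose = hqb.choose := na_col hnaQ hca.1 hcb.1 (by omega)
      have hrow : (a:ℕ) - k = (b:ℕ) - k := by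
        rw [← hca.2, ← hcb.2, this]
      exact Fin.ext (by omega)
    · rw [decFun_val3 e₁ e₂ a ha hqa,
        decFun_val4 e₁ e₂ b hb hqb (mem_BRs_of_not b hb hqb)] at hval
      have := mem_Tboard.mp (hsubQ hqa.choose_spec.1)
      omega
    · rw [decFun_val4 e₁ e₂ a ha hqa (mem_BRs_of_not a ha hqa),
        decFun_val3 e₁ e₂ b hb hqb] at hval
      have := mem_Tboard.mp (hsubQ hqb.choose_spec.1)
      omega
    · rw [decFun_val4 e₁ e₂ a ha hqa (mem_BRs_of_not a ha hqa),
        decFun_val4 e₁ e₂ b hb hqb (mem_BRs_of_not b hb hqb)] at hval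
      have hy : ((e₂ ⟨(a:ℕ) - k, mem_BRs_of_not a ha hqa⟩ : ℕ))
          = ((e₂ ⟨(b:ℕ) - k, mem_BRs_of_not b hb hqb⟩ : ℕ)) := by omega
      have := e₂.injective (Subtype.ext hy)
      have := congrArg Subtype.val this
      simp only at this
      exact Fin.ext (by omega)

noncomputable def decPerm : Perm (Fin (k+m)) :=
  Equiv.ofBijective (decFun k m P Q e₁ e₂)
    (Finite.injective_iff_bijective.mp (decFun_inj hsubP hnaP hsubQ hnaQ e₁ e₂))

lemma decPerm_apply (a : Fin (k+m)) :
    decPerm hsubP hnaP hsubQ hnaQ e₁ e₂ a = decFun k m P Q e₁ e₂ a := rfl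

end Dec2

end CIA
namespace CIA
open Finset Equiv

section Dec3

variable {k m : ℕ} {P Q : Board}
variable (hsubP : P ⊆ Tboard k) (hnaP : ∀ c ∈ P, ∀ c' ∈ P, c ≠ c' → c.1 ≠ c'.1 ∧ c.2 ≠ c'.2)
variable (hsubQ : Q ⊆ Tboard m) (hnaQ : ∀ c ∈ Q, ∀ c' ∈ Q, c ≠ c' → c.1 ≠ c'.1 ∧ c.2 ≠ c'.2)
variable (e₁ : ↥(ARs k P) ≃ ↥(JCs m Q)) (e₂ : ↥(BRs m Q) ≃ ↥(RCs k P))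

include hsubP hnaP hsubQ hnaQ in
lemma decPerm_band : decPerm hsubP hnaP hsubQ hnaQ e₁ e₂ ∈ bandSet k m := by
  rw [bandSet, Finset.mem_filter]
  refine ⟨Finset.mem_univ _, ?_⟩
  intro a
  rw [decPerm_apply]
  by_cases ha : (a:ℕ) < k
  · by_cases hp : ∃ c ∈ P, c.1 = k - 1 - (a:ℕ)
    · rw [decFun_val1 hsubP e₁ e₂ a ha hp]
      have h1 := mem_Tboard.mp (hsubP hp.choose_spec.1)
      have h2 := hp.choose_spec.2
      omega
    · rw [decFun_val2 e₁ e₂ a ha hp (mem_ARs_of_not a ha hp)]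
      omega
  · by_cases hq : ∃ c ∈ Q, c.1 = (a:ℕ) - k
    · rw [decFun_val3 e₁ e₂ a ha hq]
      have h1 := mem_Tboard.mp (hsubQ hq.choose_spec.1)
      have h2 := hq.choose_spec.2
      omega
    · rw [decFun_val4 e₁ e₂ a ha hq (mem_BRs_of_not a ha hq)]
      have h1 := e2_val_lt e₂ ⟨(a:ℕ) - k, mem_BRs_of_not a ha hq⟩
      have := a.isLt
      omega

include hsubP hnaP hsubQ hnaQ in
lemma decPerm_Pv : Pv k m (decPerm hsubP hnaP hsubQ hnaQ e₁ e₂) = P := by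
  ext c
  constructor
  · intro hc
    obtain ⟨a, ha1, ha2, rfl⟩ := mem_Pv.mp hc
    rw [decPerm_apply] at ha2 ⊢
    by_cases hp : ∃ c ∈ P, c.1 = k - 1 - (a:ℕ)
    · rw [decFun_val1 hsubP e₁ e₂ a ha1 hp] at ha2 ⊢
      have hcs := hp.choose_spec
      have : (k - 1 - (a:ℕ), m + hp.choose.2 - m) = hp.choose := by
        apply Prod.ext
        · simp only; omega
        · simp only; omega
      rw [this]
      exact hcs.1
    · exfalso
      rw [decFun_val2 e₁ e₂ a ha1 hp (mem_ARs_of_not a ha1 hp)] at ha2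
      have h1 := e1_val_lt e₁ ⟨k - 1 - (a:ℕ), mem_ARs_of_not a ha1 hp⟩
      omega
  · intro hc
    have hTb := mem_Tboard.mp (hsubP hc)
    have hk : 0 < k := by omega
    set a : Fin (k+m) := ⟨k - 1 - c.1, by omega⟩ with haDef
    have haval : (a:ℕ) = k - 1 - c.1 := rfl
    have ha1 : (a:ℕ) < k := by omega
    have hp : ∃ c' ∈ P, c'.1 = k - 1 - (a:ℕ) := ⟨c, hc, by omega⟩
    have hcc : hp.choose = c := by
      apply na_row hnaP hp.choose_spec.1 hc
      have := hp.choose_spec.2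
      omega
    rw [mem_Pv]
    refine ⟨a, ha1, ?_, ?_⟩
    · rw [decPerm_apply, decFun_val1 hsubP e₁ e₂ a ha1 hp]
      omega
    · rw [decPerm_apply, decFun_val1 hsubP e₁ e₂ a ha1 hp]
      apply Prod.ext
      · simp only; omega
      · simp only; rw [hcc]; omega

include hsubP hnaP hsubQ hnaQ in
lemma decPerm_Qv : Qv k m (decPerm hsubP hnaP hsubQ hnaQ e₁ e₂) = Q := by
  ext c
  constructor
  · intro hc
    obtain ⟨a, ha1, ha2, rfl⟩ := mem_Qv.mp hc
    have ha1' : ¬ (a:ℕ) < k := by omega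
    rw [decPerm_apply] at ha2 ⊢
    by_cases hq : ∃ c ∈ Q, c.1 = (a:ℕ) - k
    · rw [decFun_val3 e₁ e₂ a ha1' hq] at ha2 ⊢
      have hcs := hq.choose_spec
      have hTb := mem_Tboard.mp (hsubQ hcs.1)
      have : ((a:ℕ) - k, m - 1 - (m - 1 - hq.choose.2)) = hq.choose := by
        apply Prod.ext
        · simp only; omega
        · simp only; omega
      rw [this]
      exact hcs.1
    · exfalso
      rw [decFun_val4 e₁ e₂ a ha1' hq (mem_BRs_of_not a ha1' hq)] at ha2
      omega
  · intro hc
    have hTb := mem_Tboard.mp (hsubQ hc)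
    have hm : 0 < m := by omega
    set a : Fin (k+m) := ⟨k + c.1, by omega⟩ with haDef
    have haval : (a:ℕ) = k + c.1 := rfl
    have ha1 : ¬ (a:ℕ) < k := by omega
    have hq : ∃ c' ∈ Q, c'.1 = (a:ℕ) - k := ⟨c, hc, by omega⟩
    have hcc : hq.choose = c := by
      apply na_row hnaQ hq.choose_spec.1 hc
      have := hq.choose_spec.2
      omega
    rw [mem_Qv]
    refine ⟨a, by omega, ?_, ?_⟩
    · rw [decPerm_apply, decFun_val3 e₁ e₂ a ha1 hq]
      rw [hcc]
      omega
    · rw [decPerm_apply, decFun_val3 e₁ e₂ a ha1 hq]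
      apply Prod.ext
      · simp only; omega
      · simp only; rw [hcc]; omega

end Dec3

section Enc

variable {k m : ℕ} {i : ℕ} {P Q : Board}
variable (hik : i ≤ k) (him : i ≤ m)
variable (hP : P ∈ rookConfigs (Tboard k) (k-i)) (hQ : Q ∈ rookConfigs (Tboard m) (m-i))
variable (v : Perm (Fin (k+m))) (hPv : Pv k m v = P) (hQv : Qv k m v = Q)

def rowOf (x : ↥(ARs k P)) : Fin (k+m) :=
  ⟨k - 1 - x.1, by
    have hx := (Finset.mem_filter.mp x.2).1
    rw [Finset.mem_range] at hx
    clear * - hx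
    omega⟩

def rowOfB (x : ↥(BRs m Q)) : Fin (k+m) :=
  ⟨k + x.1, by
    have hx := (Finset.mem_filter.mp x.2).1
    rw [Finset.mem_range] at hx
    clear * - hx
    omega⟩

include hPv in
lemma encTop_lt (x : ↥(ARs k P)) : (v (rowOf x) : ℕ) < m := by
  by_contra hge
  have hx := (Finset.mem_filter.mp x.2)
  rw [Finset.mem_range] at hx
  have hfree := hx.2
  have hrow : (rowOf (k := k) (m := m) (P := P) x : ℕ) = k - 1 - x.1 := rfl
  have hmem0 : (k - 1 - (rowOf (k := k) (m := m) (P := P) x : ℕ), (v (rowOf x) : ℕ) - m)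
      ∈ Pv k m v := by
    rw [mem_Pv]
    exact ⟨rowOf x, by rw [hrow]; omega, by omega, rfl⟩
  rw [hPv] at hmem0
  have := hfree _ hmem0
  apply this
  show k - 1 - (rowOf (k := k) (m := m) (P := P) x : ℕ) = x.1
  rw [hrow]
  omega

include hPv hQv in
lemma encTop_mem (x : ↥(ARs k P)) : m - 1 - (v (rowOf x) : ℕ) ∈ JCs m Q := by
  have hlt := encTop_lt v hPv x
  unfold JCs
  rw [Finset.mem_filter, Finset.mem_range]
  refine ⟨by omega, ?_⟩
  intro c hc heq
  rw [← hQv] at hc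
  obtain ⟨a', h1', h2', rfl⟩ := mem_Qv.mp hc
  simp only at heq
  have hveq : (v a' : ℕ) = (v (rowOf x) : ℕ) := by omega
  have : a' = rowOf (k := k) (m := m) (P := P) x := v.injective (Fin.ext hveq)
  have hrow : (rowOf (k := k) (m := m) (P := P) x : ℕ) = k - 1 - x.1 := rfl
  have hx := (Finset.mem_filter.mp x.2).1
  rw [Finset.mem_range] at hx
  omega

include hQv in
lemma encBot_ge (x : ↥(BRs m Q)) : m ≤ (v (rowOfB x) : ℕ) := by
  by_contra hlt
  have hx := (Finset.mem_filter.mp x.2)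
  rw [Finset.mem_range] at hx
  have hfree := hx.2
  have hrow : (rowOfB (k := k) (m := m) (Q := Q) x : ℕ) = k + x.1 := rfl
  have hmem0 : ((rowOfB (k := k) (m := m) (Q := Q) x : ℕ) - k, m - 1 - (v (rowOfB x) : ℕ))
      ∈ Qv k m v := by
    rw [mem_Qv]
    exact ⟨rowOfB x, by rw [hrow]; omega, by omega, rfl⟩
  rw [hQv] at hmem0
  have := hfree _ hmem0
  apply this
  show (rowOfB (k := k) (m := m) (Q := Q) x : ℕ) - k = x.1
  rw [hrow]
  omega

include hPv hQv in
lemma encBot_mem (x : ↥(BRs m Q)) : (v (rowOfB x) : ℕ) - m ∈ RCs k P := by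
  have hge := encBot_ge v hQv x
  have hva := (v (rowOfB x)).isLt
  unfold RCs
  rw [Finset.mem_filter, Finset.mem_range]
  refine ⟨by omega, ?_⟩
  intro c hc heq
  rw [← hPv] at hc
  obtain ⟨a', h1', h2', rfl⟩ := mem_Pv.mp hc
  simp only at heq
  have hveq : (v a' : ℕ) = (v (rowOfB x) : ℕ) := by omega
  have : a' = rowOfB (k := k) (m := m) (Q := Q) x := v.injective (Fin.ext hveq)
  have hrow : (rowOfB (k := k) (m := m) (Q := Q) x : ℕ) = k + x.1 := rfl
  omega

noncomputable def encTopE : ↥(ARs k P) ≃ ↥(JCs m Q) :=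
  Equiv.ofBijective (fun x => ⟨m - 1 - (v (rowOf x) : ℕ), encTop_mem v hPv hQv x⟩)
    (by
      rw [Fintype.bijective_iff_injective_and_card]
      constructor
      · intro x y hxy
        have hval := congrArg Subtype.val hxy
        simp only at hval
        have h1 := encTop_lt v hPv x
        have h2 := encTop_lt v hPv y
        have hveq : (v (rowOf x) : ℕ) = (v (rowOf y) : ℕ) := by omega
        have hre : rowOf (k := k) (m := m) (P := P) x = rowOf (k := k) (m := m) (P := P) y := v.injective (Fin.ext hveq)
        have hrv := congrArg Fin.val hre
        have hx := (Finset.mem_filter.mp x.2).1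
        have hy := (Finset.mem_filter.mp y.2).1
        rw [Finset.mem_range] at hx hy
        have : (x : ℕ) = (y : ℕ) := by
          have e1 : (rowOf (k := k) (m := m) (P := P) x : ℕ) = k - 1 - x.1 := rfl
          have e2 : (rowOf (k := k) (m := m) (P := P) y : ℕ) = k - 1 - y.1 := rfl
          omega
        exact Subtype.ext this
      · rw [Fintype.card_coe, Fintype.card_coe, ARs_card hP hik, JCs_card hQ him])

noncomputable def encBotE : ↥(BRs m Q) ≃ ↥(RCs k P) :=
  Equiv.ofBijective (fun x => ⟨(v (rowOfB x) : ℕ) - m, encBot_mem v hPv hQv x⟩)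
    (by
      rw [Fintype.bijective_iff_injective_and_card]
      constructor
      · intro x y hxy
        have hval := congrArg Subtype.val hxy
        simp only at hval
        have h1 := encBot_ge v hQv x
        have h2 := encBot_ge v hQv y
        have hveq : (v (rowOfB x) : ℕ) = (v (rowOfB y) : ℕ) := by omega
        have hre : rowOfB (k := k) (m := m) (Q := Q) x = rowOfB (k := k) (m := m) (Q := Q) y := v.injective (Fin.ext hveq)
        have hrv := congrArg Fin.val hre
        have : (x : ℕ) = (y : ℕ) := by
          have e1 : (rowOfB (k := k) (m := m) (Q := Q) x : ℕ) = k + x.1 := rfl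
          have e2 : (rowOfB (k := k) (m := m) (Q := Q) y : ℕ) = k + y.1 := rfl
          omega
        exact Subtype.ext this
      · rw [Fintype.card_coe, Fintype.card_coe, BRs_card hQ him, RCs_card hP hik])

lemma encTopE_apply (x : ↥(ARs k P)) :
    ((encTopE hik him hP hQ v hPv hQv x : ℕ)) = m - 1 - (v (rowOf x) : ℕ) := rfl

lemma encBotE_apply (x : ↥(BRs m Q)) :
    ((encBotE hik him hP hQ v hPv hQv x : ℕ)) = (v (rowOfB x) : ℕ) - m := rfl

end Enc

end CIA
namespace CIA
open Finset Equiv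

lemma fiber_card {k m i : ℕ} {P Q : Board} (hik : i ≤ k) (him : i ≤ m)
    (hP : P ∈ rookConfigs (Tboard k) (k-i)) (hQ : Q ∈ rookConfigs (Tboard m) (m-i)) :
    ((bandSet k m).filter fun v => Pv k m v = P ∧ Qv k m v = Q).card
      = i.factorial * i.factorial := by
  classical
  obtain ⟨hsubP, hcP, hnaP⟩ := mem_rookConfigs.mp hP
  obtain ⟨hsubQ, hcQ, hnaQ⟩ := mem_rookConfigs.mp hQ
  have htarget : ((univ : Finset ((↥(ARs k P) ≃ ↥(JCs m Q)) × (↥(BRs m Q) ≃ ↥(RCs k P))))).card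
      = i.factorial * i.factorial := by
    rw [Finset.card_univ, Fintype.card_prod]
    rw [Fintype.card_equiv (Fintype.equivOfCardEq
      (by rw [Fintype.card_coe, Fintype.card_coe, ARs_card hP hik, JCs_card hQ him]))]
    rw [Fintype.card_equiv (Fintype.equivOfCardEq
      (by rw [Fintype.card_coe, Fintype.card_coe, BRs_card hQ him, RCs_card hP hik]))]
    rw [Fintype.card_coe, Fintype.card_coe, ARs_card hP hik, BRs_card hQ him]
  rw [← htarget]
  refine Finset.card_bij'
    (fun v hv => (encTopE hik him hP hQ v (Finset.mem_filter.mp hv).2.1 (Finset.mem_filter.mp hv).2.2,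
                  encBotE hik him hP hQ v (Finset.mem_filter.mp hv).2.1 (Finset.mem_filter.mp hv).2.2))
    (fun e _ => decPerm hsubP hnaP hsubQ hnaQ e.1 e.2)
    (fun v hv => Finset.mem_univ _)
    (fun e _ => Finset.mem_filter.mpr ⟨decPerm_band hsubP hnaP hsubQ hnaQ e.1 e.2,
      decPerm_Pv hsubP hnaP hsubQ hnaQ e.1 e.2, decPerm_Qv hsubP hnaP hsubQ hnaQ e.1 e.2⟩)
    ?_ ?_
  · -- decode ∘ encode = id
    intro v hv
    have hPv := (Finset.mem_filter.mp hv).2.1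
    have hQv := (Finset.mem_filter.mp hv).2.2
    set e₁ := encTopE hik him hP hQ v hPv hQv with he₁
    set e₂ := encBotE hik him hP hQ v hPv hQv with he₂
    apply Equiv.ext
    intro a
    apply Fin.ext
    rw [decPerm_apply]
    have halt := a.isLt
    by_cases ha : (a:ℕ) < k
    · by_cases hp : ∃ c ∈ P, c.1 = k - 1 - (a:ℕ)
      · rw [decFun_val1 hsubP e₁ e₂ a ha hp]
        have hcs := hp.choose_spec
        have hmem : hp.choose ∈ Pv k m v := by rw [hPv]; exact hcs.1
        obtain ⟨a', ha', hva', hc⟩ := mem_Pv.mp hmem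
        have h1 := congrArg Prod.fst hc
        have h2 := congrArg Prod.snd hc
        simp only at h1 h2
        have haa : a' = a := by
          apply Fin.ext
          have := hcs.2
          omega
        subst haa
        omega
      · rw [decFun_val2 e₁ e₂ a ha hp (mem_ARs_of_not a ha hp)]
        have hvalt : (v a : ℕ) < m := by
          by_contra hge
          apply hp
          refine ⟨(k - 1 - (a:ℕ), (v a : ℕ) - m), ?_, rfl⟩
          rw [← hPv]
          exact mem_Pv.mpr ⟨a, ha, by omega, rfl⟩
        rw [he₁, encTopE_apply]
        have hre : rowOf (k := k) (m := m) (P := P) ⟨k - 1 - (a:ℕ), mem_ARs_of_not a ha hp⟩ = a := by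
          apply Fin.ext
          show k - 1 - (k - 1 - (a:ℕ)) = (a:ℕ)
          omega
        rw [hre]
        omega
    · by_cases hq : ∃ c ∈ Q, c.1 = (a:ℕ) - k
      · rw [decFun_val3 e₁ e₂ a ha hq]
        have hcs := hq.choose_spec
        have hmem : hq.choose ∈ Qv k m v := by rw [hQv]; exact hcs.1
        obtain ⟨a', ha', hva', hc⟩ := mem_Qv.mp hmem
        have h1 := congrArg Prod.fst hc
        have h2 := congrArg Prod.snd hc
        simp only at h1 h2
        have haa : a' = a := by
          apply Fin.ext
          have := hcs.2
          omega
        subst haa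
        omega
      · rw [decFun_val4 e₁ e₂ a ha hq (mem_BRs_of_not a ha hq)]
        have hvge : m ≤ (v a : ℕ) := by
          by_contra hlt
          apply hq
          refine ⟨((a:ℕ) - k, m - 1 - (v a : ℕ)), ?_, rfl⟩
          rw [← hQv]
          exact mem_Qv.mpr ⟨a, by omega, by omega, rfl⟩
        rw [he₂, encBotE_apply]
        have hre : rowOfB (k := k) (m := m) (Q := Q) ⟨(a:ℕ) - k, mem_BRs_of_not a ha hq⟩ = a := by
          apply Fin.ext
          show k + ((a:ℕ) - k) = (a:ℕ)
          omega
        rw [hre]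
        omega
  · -- encode ∘ decode = id
    intro e he
    set w := decPerm hsubP hnaP hsubQ hnaQ e.1 e.2 with hw
    have hPw : Pv k m w = P := decPerm_Pv hsubP hnaP hsubQ hnaQ e.1 e.2
    have hQw : Qv k m w = Q := decPerm_Qv hsubP hnaP hsubQ hnaQ e.1 e.2
    have hbw : w ∈ bandSet k m := decPerm_band hsubP hnaP hsubQ hnaQ e.1 e.2
    apply Prod.ext
    · apply Equiv.ext
      intro x
      apply Subtype.ext
      have hx := Finset.mem_filter.mp x.2
      rw [Finset.mem_range] at hx
      show ((encTopE hik him hP hQ w hPw hQw x : ℕ)) = ((e.1 x : ℕ))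
      rw [encTopE_apply]
      have hrv : (rowOf (k := k) (m := m) (P := P) x : ℕ) = k - 1 - x.1 := rfl
      have hra : (rowOf (k := k) (m := m) (P := P) x : ℕ) < k := by omega
      have hpx : ¬ ∃ c ∈ P, c.1 = k - 1 - (rowOf (k := k) (m := m) (P := P) x : ℕ) := by
        intro hcon
        obtain ⟨c, hc, hc1⟩ := hcon
        exact hx.2 c hc (by omega)
      have hmm : k - 1 - (rowOf (k := k) (m := m) (P := P) x : ℕ) ∈ ARs k P :=
        mem_ARs_of_not _ hra hpx
      have hval := decFun_val2 e.1 e.2 (rowOf x) hra hpx hmm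
      rw [hw, decPerm_apply, hval]
      have harg : (⟨k - 1 - (rowOf (k := k) (m := m) (P := P) x : ℕ), hmm⟩ : ↥(ARs k P)) = x := by
        apply Subtype.ext
        show k - 1 - (rowOf (k := k) (m := m) (P := P) x : ℕ) = x.1
        omega
      rw [harg]
      have := e1_val_lt e.1 x
      omega
    · apply Equiv.ext
      intro x
      apply Subtype.ext
      have hx := Finset.mem_filter.mp x.2
      rw [Finset.mem_range] at hx
      show ((encBotE hik him hP hQ w hPw hQw x : ℕ)) = ((e.2 x : ℕ))
      rw [encBotE_apply]
      have hrv : (rowOfB (k := k) (m := m) (Q := Q) x : ℕ) = k + x.1 := rfl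
      have hra : ¬ (rowOfB (k := k) (m := m) (Q := Q) x : ℕ) < k := by omega
      have hqx : ¬ ∃ c ∈ Q, c.1 = (rowOfB (k := k) (m := m) (Q := Q) x : ℕ) - k := by
        intro hcon
        obtain ⟨c, hc, hc1⟩ := hcon
        exact hx.2 c hc (by omega)
      have hmm : (rowOfB (k := k) (m := m) (Q := Q) x : ℕ) - k ∈ BRs m Q :=
        mem_BRs_of_not _ hra hqx
      have hval := decFun_val4 e.1 e.2 (rowOfB x) hra hqx hmm
      rw [hw, decPerm_apply, hval]
      have harg : (⟨(rowOfB (k := k) (m := m) (Q := Q) x : ℕ) - k, hmm⟩ : ↥(BRs m Q)) = x := by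
        apply Subtype.ext
        show (rowOfB (k := k) (m := m) (Q := Q) x : ℕ) - k = x.1
        omega
      rw [harg]
      omega

end CIA
namespace CIA
open Finset Equiv

theorem band_card (k m : ℕ) :
    (bandSet k m).card
      = ∑ i ∈ Finset.range (k+1),
          stirling2 (k+1) (i+1) * stirling2 (m+1) (i+1) * Nat.factorial i ^ 2 := by
  classical
  set M := min k m with hM
  set T : Finset (Board × Board) := (Finset.range (M+1)).biUnion
    (fun i => (rookConfigs (Tboard k) (k-i)) ×ˢ (rookConfigs (Tboard m) (m-i))) with hT
  have hmap : ∀ v ∈ bandSet k m, (Pv k m v, Qv k m v) ∈ T := by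
    intro v hv
    rw [hT, Finset.mem_biUnion]
    refine ⟨statL k m v, ?_, ?_⟩
    · rw [Finset.mem_range]
      have := statL_le_k v
      have := statL_le_m v
      omega
    · rw [Finset.mem_product]
      exact ⟨Pv_mem hv, Qv_mem hv⟩
  rw [Finset.card_eq_sum_card_fiberwise hmap, hT]
  have hdisj : (↑(Finset.range (M+1)) : Set ℕ).PairwiseDisjoint
      (fun i => (rookConfigs (Tboard k) (k-i)) ×ˢ (rookConfigs (Tboard m) (m-i))) := by
    intro i hi j hj hij
    simp only [Finset.coe_range, Set.mem_Iio] at hi hj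
    simp only [Function.onFun]
    rw [Finset.disjoint_left]
    intro p hp1 hp2
    rw [Finset.mem_product] at hp1 hp2
    have h1 := (mem_rookConfigs.mp hp1.1).2.1
    have h2 := (mem_rookConfigs.mp hp2.1).2.1
    apply hij
    omega
  rw [Finset.sum_biUnion hdisj]
  have hterm : ∀ i ∈ Finset.range (M+1),
      (∑ p ∈ (rookConfigs (Tboard k) (k-i)) ×ˢ (rookConfigs (Tboard m) (m-i)),
        ((bandSet k m).filter fun v => (Pv k m v, Qv k m v) = p).card)
      = stirling2 (k+1) (i+1) * stirling2 (m+1) (i+1) * Nat.factorial i ^ 2 := by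
    intro i hi
    rw [Finset.mem_range] at hi
    have hik : i ≤ k := by omega
    have him : i ≤ m := by omega
    have hconst : ∀ p ∈ (rookConfigs (Tboard k) (k-i)) ×ˢ (rookConfigs (Tboard m) (m-i)),
        ((bandSet k m).filter fun v => (Pv k m v, Qv k m v) = p).card
          = Nat.factorial i * Nat.factorial i := by
      intro p hp
      rw [Finset.mem_product] at hp
      have heq : ((bandSet k m).filter fun v => (Pv k m v, Qv k m v) = p)
          = ((bandSet k m).filter fun v => Pv k m v = p.1 ∧ Qv k m v = p.2) := by
        apply Finset.filter_congr
        intro v _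
        rw [Prod.ext_iff]
      rw [heq, fiber_card hik him hp.1 hp.2]
    rw [Finset.sum_congr rfl hconst, Finset.sum_const, smul_eq_mul, Finset.card_product]
    rw [tri_card, tri_card]
    have e1 : k + 1 - (k - i) = i + 1 := by omega
    have e2 : m + 1 - (m - i) = i + 1 := by omega
    rw [e1, e2, sq]
  rw [Finset.sum_congr rfl hterm]
  apply Finset.sum_subset
  · intro i hi
    rw [Finset.mem_range] at *
    omega
  · intro i hi hni
    rw [Finset.mem_range] at hi hni
    have h0 : m + 1 < i + 1 := by omega
    simp [stirling2_eq_zero h0]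

end CIA
/-- For `w = (n-k+1, …, n, 1, …, n-k) ∈ S_n`, the number of elements of
the Bruhat interval `[id, w]` is `Σ_{i=0}^k S_{k+1,i+1} S_{n-k+1,i+1} (i!)²`. -/
theorem card_interval_typeA (n k : ℕ) (hk : k ≤ n) (w : Equiv.Perm (Fin n))
    (hw : ∀ i : Fin n, (w i : ℕ) = if (i : ℕ) < k then (i : ℕ) + (n - k) else (i : ℕ) - k) :
    (Finset.univ.filter fun v : Equiv.Perm (Fin n) => BruhatLE 1 v ∧ BruhatLE v w).card =
      ∑ i ∈ Finset.range (k + 1),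
        stirling2 (k + 1) (i + 1) * stirling2 (n - k + 1) (i + 1) * Nat.factorial i ^ 2 := by
  obtain ⟨m, rfl⟩ : ∃ m, n = k + m := ⟨n - k, by omega⟩
  have hnk : k + m - k = m := by omega
  rw [hnk]
  have hw' : ∀ i : Fin (k+m), (w i : ℕ) = if (i : ℕ) < k then (i : ℕ) + m else (i : ℕ) - k := by
    intro i
    have h := hw i
    rwa [hnk] at h
  have hset : (Finset.univ.filter fun v : Equiv.Perm (Fin (k+m)) => BruhatLE 1 v ∧ BruhatLE v w)
      = CIA.bandSet k m := by
    rw [CIA.bandSet]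
    apply Finset.filter_congr
    intro v _
    constructor
    · intro h
      exact CIA.band_of_le hw' h.2
    · intro hb
      exact ⟨CIA.bruhatLE_one v, CIA.le_of_band hw' hb⟩
  rw [hset, CIA.band_card]
end

section
/- For all integers 0 ≤ k ≤ n: Σ_{i=0}^{k} S_{k+1,i+1} · S_{n−k+1,i+1} · (i!)² = (−1)^k · Σ_{i=0}^{k} (−1)^i · (i+1)^{n−k} · i! · S_{k,i}, where S_{a,b} are the Stirling numbers of the second kind. -/
open Finset

lemma st_zero (n : ℕ) : stirling2 (n+1) 0 = 0 := by
  show (if (0:ℕ) = 0 then 0 else stirling2 n (0-1)) + 0 * stirling2 n 0 = 0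
  simp

lemma st_one : ∀ n : ℕ, stirling2 (n+1) 1 = 1
  | 0 => rfl
  | n+1 => by
    show (if (1:ℕ) = 0 then 0 else stirling2 (n+1) 0) + 1 * stirling2 (n+1) 1 = 1
    rw [if_neg (by omega), st_zero, st_one n]

lemma st_gt : ∀ n k : ℕ, n < k → stirling2 n k = 0
  | 0, k+1, _ => rfl
  | n+1, k+1, h => by
    show (if k+1 = 0 then 0 else stirling2 n k) + (k+1) * stirling2 n (k+1) = 0
    rw [if_neg (by omega), st_gt n k (by omega), st_gt n (k+1) (by omega)]
    ring

lemma st_rec (n k : ℕ) : (stirling2 (n+1) (k+1) : ℤ)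
    = stirling2 n k + ((k:ℤ)+1) * stirling2 n (k+1) := by
  rw [show stirling2 (n+1) (k+1)
      = (if k+1 = 0 then 0 else stirling2 n k) + (k+1) * stirling2 n (k+1) from rfl]
  rw [if_neg (by omega)]
  push_cast
  ring

lemma lemA (m i : ℕ) :
    (Nat.factorial i : ℤ) * stirling2 (m+1) (i+1) =
      ∑ l ∈ Finset.range (i+1), (-1:ℤ)^(i+l) * (Nat.choose i l) * ((l:ℤ)+1)^m := by
  induction m generalizing i with
  | zero =>
    have hs : (stirling2 1 (i+1) : ℤ) = if i = 0 then 1 else 0 := by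
      rcases i with _ | j
      · rfl
      · rw [st_gt 1 (j+2) (by omega)]
        simp
    have e : ∑ l ∈ Finset.range (i+1), (-1:ℤ)^(i+l) * (Nat.choose i l) * ((l:ℤ)+1)^0
        = (-1:ℤ)^i * ∑ l ∈ Finset.range (i+1), (-1:ℤ)^l * (Nat.choose i l) := by
      rw [Finset.mul_sum]
      refine Finset.sum_congr rfl fun l _ => by rw [pow_add]; ring
    rw [e, Int.alternating_sum_range_choose, hs]
    rcases eq_or_ne i 0 with rfl | h
    · simp [Nat.factorial]
    · simp [h]
  | succ m ih =>
    rcases i with _ | j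
    · rw [st_one (m+1)]
      simp
    · have hrec := st_rec (m+1) (j+1)
      have key : ∀ l ∈ Finset.range (j+2),
          (-1:ℤ)^(j+1+l) * (Nat.choose (j+1) l) * ((l:ℤ)+1)^(m+1)
          = ((j:ℤ)+2) * ((-1:ℤ)^(j+1+l) * (Nat.choose (j+1) l) * ((l:ℤ)+1)^m)
            + ((j:ℤ)+1) * ((-1:ℤ)^(j+l) * (Nat.choose j l) * ((l:ℤ)+1)^m) := by
        intro l hl
        have hl'' : l ≤ j + 1 := Nat.lt_succ_iff.mp (Finset.mem_range.mp hl)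
        have hc : ((j:ℤ)+1) * (Nat.choose j l) = (((j:ℤ)+1) - (l:ℤ)) * (Nat.choose (j+1) l) := by
          have h := congrArg (Nat.cast : ℕ → ℤ) (Nat.choose_mul_succ_eq j l)
          push_cast [Nat.cast_sub hl''] at h
          linarith
        have hsign : (-1:ℤ)^(j+l) = -(-1:ℤ)^(j+1+l) := by
          rw [show j+1+l = (j+l)+1 by omega, pow_succ]
          ring
        rw [hsign, pow_succ]
        linear_combination ((-1:ℤ)^(j+1+l) * ((l:ℤ)+1)^m) * hc
      rw [Finset.sum_congr rfl key, Finset.sum_add_distrib, ← Finset.mul_sum, ← Finset.mul_sum]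
      have e1 : ∑ l ∈ Finset.range (j+2), (-1:ℤ)^(j+l) * (Nat.choose j l) * ((l:ℤ)+1)^m
          = (Nat.factorial j : ℤ) * stirling2 (m+1) (j+1) := by
        rw [Finset.sum_range_succ, ih j]
        simp [Nat.choose_succ_self]
      rw [e1, ← ih (j+1), hrec]
      push_cast [Nat.factorial_succ]
      ring

lemma lemB (k l : ℕ) :
    ∑ i ∈ Finset.range (k+1),
        (-1:ℤ)^i * (Nat.choose i l) * (Nat.factorial i) * stirling2 (k+1) (i+1)
      = (-1:ℤ)^k * (Nat.factorial l) * stirling2 k l := by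
  induction k generalizing l with
  | zero =>
    rcases l with _ | t
    · show (-1:ℤ)^0 * (Nat.choose 0 0) * (Nat.factorial 0) * stirling2 1 1 + 0
        = (-1:ℤ)^0 * (Nat.factorial 0) * stirling2 0 0
      norm_num [show stirling2 1 1 = 1 from st_one 0, show stirling2 0 0 = 1 from rfl]
    · show (-1:ℤ)^0 * (Nat.choose 0 (t+1)) * (Nat.factorial 0) * stirling2 1 1 + 0
        = (-1:ℤ)^0 * (Nat.factorial (t+1)) * stirling2 0 (t+1)
      rw [st_gt 0 (t+1) (by omega), Nat.choose_eq_zero_of_lt (by omega : (0:ℕ) < t+1)]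
      norm_num
  | succ k ih =>
    have split : ∑ i ∈ Finset.range (k+2),
        (-1:ℤ)^i * (Nat.choose i l) * (Nat.factorial i) * stirling2 (k+2) (i+1)
        = (∑ i ∈ Finset.range (k+2),
            (-1:ℤ)^i * (Nat.choose i l) * (Nat.factorial i) * stirling2 (k+1) i)
          + (∑ i ∈ Finset.range (k+2),
            (-1:ℤ)^i * (Nat.choose i l) * (Nat.factorial i) * (((i:ℤ)+1) * stirling2 (k+1) (i+1))) := by
      rw [← Finset.sum_add_distrib]
      refine Finset.sum_congr rfl fun i _ => by rw [st_rec (k+1) i]; ring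
    have eP : ∑ i ∈ Finset.range (k+2),
        (-1:ℤ)^i * (Nat.choose i l) * (Nat.factorial i) * stirling2 (k+1) i
        = ∑ i ∈ Finset.range (k+1),
          (-1:ℤ)^(i+1) * (Nat.choose (i+1) l) * (Nat.factorial (i+1)) * stirling2 (k+1) (i+1) := by
      rw [Finset.sum_range_succ' _ (k+1), st_zero k]
      simp
    have eQ : ∑ i ∈ Finset.range (k+2),
        (-1:ℤ)^i * (Nat.choose i l) * (Nat.factorial i) * (((i:ℤ)+1) * stirling2 (k+1) (i+1))
        = ∑ i ∈ Finset.range (k+1),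
          (-1:ℤ)^i * (Nat.choose i l) * (Nat.factorial i) * (((i:ℤ)+1) * stirling2 (k+1) (i+1)) := by
      rw [Finset.sum_range_succ, st_gt (k+1) (k+2) (by omega)]
      simp
    rw [split, eP, eQ, ← Finset.sum_add_distrib]
    rcases l with _ | t
    · have tw : ∀ i ∈ Finset.range (k+1),
          (-1:ℤ)^(i+1) * (Nat.choose (i+1) 0) * (Nat.factorial (i+1)) * stirling2 (k+1) (i+1)
          + (-1:ℤ)^i * (Nat.choose i 0) * (Nat.factorial i) * (((i:ℤ)+1) * stirling2 (k+1) (i+1)) = 0 := by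
        intro i _
        rw [Nat.choose_zero_right, Nat.choose_zero_right, pow_succ]
        push_cast [Nat.factorial_succ]
        ring
      rw [Finset.sum_congr rfl tw, Finset.sum_const_zero, st_zero k]
      simp
    · have tw : ∀ i ∈ Finset.range (k+1),
          (-1:ℤ)^(i+1) * (Nat.choose (i+1) (t+1)) * (Nat.factorial (i+1)) * stirling2 (k+1) (i+1)
          + (-1:ℤ)^i * (Nat.choose i (t+1)) * (Nat.factorial i) * (((i:ℤ)+1) * stirling2 (k+1) (i+1))
          = (-((t:ℤ)+1)) * ((-1:ℤ)^i * (Nat.choose i (t+1)) * (Nat.factorial i) * stirling2 (k+1) (i+1))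
            + (-((t:ℤ)+1)) * ((-1:ℤ)^i * (Nat.choose i t) * (Nat.factorial i) * stirling2 (k+1) (i+1)) := by
        intro i _
        have h1 : ((i:ℤ)+1) * (Nat.choose i t) = ((t:ℤ)+1) * (Nat.choose (i+1) (t+1)) := by
          have h := congrArg (Nat.cast : ℕ → ℤ) (Nat.add_one_mul_choose_eq i t)
          push_cast at h
          linarith
        have h2 : ((Nat.choose (i+1) (t+1) : ℕ) : ℤ) = (Nat.choose i t) + (Nat.choose i (t+1)) := by
          have h := congrArg (Nat.cast : ℕ → ℤ) (Nat.choose_succ_succ i t)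
          push_cast at h
          linarith
        rw [pow_succ]
        push_cast [Nat.factorial_succ]
        linear_combination (-(((i:ℤ)+(t:ℤ)+2)) * ((-1:ℤ)^i * (Nat.factorial i : ℤ) * (stirling2 (k+1) (i+1) : ℤ))) * h2
          + (-((-1:ℤ)^i * (Nat.factorial i : ℤ) * (stirling2 (k+1) (i+1) : ℤ))) * h1
      rw [Finset.sum_congr rfl tw, Finset.sum_add_distrib, ← Finset.mul_sum, ← Finset.mul_sum,
        ih (t+1), ih t, st_rec k t]
      push_cast [Nat.factorial_succ, pow_succ]
      ring

/-- For `0 ≤ k ≤ n`,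
`Σ_{i=0}^k S_{k+1,i+1} S_{n-k+1,i+1} (i!)² = (-1)^k Σ_{i=0}^k (-1)^i (i+1)^{n-k} i! S_{k,i}`. -/
theorem stirling_identity (n k : ℕ) (hk : k ≤ n) :
    (∑ i ∈ Finset.range (k + 1),
        (stirling2 (k + 1) (i + 1) : ℤ) * (stirling2 (n - k + 1) (i + 1) : ℤ) *
          (Nat.factorial i : ℤ) ^ 2) =
      (-1 : ℤ) ^ k * ∑ i ∈ Finset.range (k + 1),
        (-1 : ℤ) ^ i * ((i : ℤ) + 1) ^ (n - k) * (Nat.factorial i : ℤ) * (stirling2 k i : ℤ) := by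
  have key : ∀ i ∈ Finset.range (k+1),
      (stirling2 (k + 1) (i + 1) : ℤ) * (stirling2 (n - k + 1) (i + 1) : ℤ) * (Nat.factorial i : ℤ) ^ 2
      = ∑ l ∈ Finset.range (k+1),
          ((-1:ℤ)^l * ((l:ℤ)+1)^(n-k)) *
            ((-1:ℤ)^i * (Nat.choose i l) * (Nat.factorial i) * stirling2 (k+1) (i+1)) := by
    intro i hi
    have hi' : i + 1 ≤ k + 1 := Finset.mem_range.mp hi
    have ext : ∑ l ∈ Finset.range (i+1), (-1:ℤ)^(i+l) * (Nat.choose i l) * ((l:ℤ)+1)^(n-k)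
        = ∑ l ∈ Finset.range (k+1), (-1:ℤ)^(i+l) * (Nat.choose i l) * ((l:ℤ)+1)^(n-k) := by
      refine Finset.sum_subset (Finset.range_subset_range.mpr hi') fun l _ hl => ?_
      have hil : i < l := by simpa using hl
      simp [Nat.choose_eq_zero_of_lt hil]
    calc (stirling2 (k + 1) (i + 1) : ℤ) * (stirling2 (n - k + 1) (i + 1) : ℤ) * (Nat.factorial i : ℤ) ^ 2
        = ((stirling2 (k + 1) (i + 1) : ℤ) * (Nat.factorial i : ℤ))
            * ((Nat.factorial i : ℤ) * stirling2 (n - k + 1) (i + 1)) := by ring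
      _ = ((stirling2 (k + 1) (i + 1) : ℤ) * (Nat.factorial i : ℤ))
            * ∑ l ∈ Finset.range (k+1), (-1:ℤ)^(i+l) * (Nat.choose i l) * ((l:ℤ)+1)^(n-k) := by
          rw [lemA (n-k) i, ext]
      _ = _ := by
          rw [Finset.mul_sum]
          refine Finset.sum_congr rfl fun l _ => ?_
          rw [pow_add]
          ring
  rw [Finset.sum_congr rfl key, Finset.sum_comm]
  have inner : ∀ l ∈ Finset.range (k+1),
      ∑ i ∈ Finset.range (k+1),
        ((-1:ℤ)^l * ((l:ℤ)+1)^(n-k)) *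
          ((-1:ℤ)^i * (Nat.choose i l) * (Nat.factorial i) * stirling2 (k+1) (i+1))
      = (-1:ℤ)^k * ((-1:ℤ)^l * ((l:ℤ)+1)^(n-k) * (Nat.factorial l) * (stirling2 k l)) := by
    intro l _
    rw [← Finset.mul_sum, lemB k l]
    ring
  rw [Finset.sum_congr rfl inner, ← Finset.mul_sum]
end

section
/- For all integers m, k ≥ 0: (−1)^k · Σ_{i=0}^{k} (−1)^i · (i+1)^{m} · i! · S_{k,i} = (−1)^m · Σ_{i=0}^{m} (−1)^i · (i+1)^{k} · i! · S_{m,i}, where S_{a,b} are the Stirling numbers of the second kind. (Equivalently, in terms of Kaneko's poly-Bernoulli numbers, B_m^{−k} = B_k^{−m}.) -/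
open Finset

namespace PB

lemma stirling2_succ_succ (n k : ℕ) :
    stirling2 (n + 1) (k + 1) = stirling2 n k + (k + 1) * stirling2 n (k + 1) := by
  simp [stirling2]

lemma stirling2_succ_zero (n : ℕ) : stirling2 (n + 1) 0 = 0 := by
  simp [stirling2]

lemma stirling2_eq_zero : ∀ n k, n < k → stirling2 n k = 0 := by
  intro n
  induction n with
  | zero => intro k hk; match k, hk with | k + 1, _ => rfl
  | succ n ih =>
      intro k hk
      match k, hk with
      | k + 1, hk =>
        rw [stirling2_succ_succ, ih k (by omega), ih (k+1) (by omega)]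
        ring

def F (m k : ℕ) : ℤ :=
  ∑ i ∈ Finset.range (k + 1),
    (-1 : ℤ) ^ i * ((i : ℤ) + 1) ^ m * (Nat.factorial i : ℤ) * (stirling2 k i : ℤ)

def G (m k : ℕ) : ℤ :=
  ∑ i ∈ Finset.range (k + 1),
    (-1 : ℤ) ^ i * ((i : ℤ) + 2) ^ m * (Nat.factorial (i + 1) : ℤ) * (stirling2 k i : ℤ)

lemma F_zero_right (m : ℕ) : F m 0 = 1 := by
  simp [F, stirling2]

lemma F_succ_right (m k : ℕ) :
    F m (k + 1) = ∑ i ∈ Finset.range (k + 1),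
      (-1 : ℤ) ^ i * (Nat.factorial i : ℤ) * (stirling2 k i : ℤ) *
        (((i : ℤ) + 1) ^ m * (i : ℤ) - ((i : ℤ) + 2) ^ m * ((i : ℤ) + 1)) := by
  have h0 : F m (k + 1) = ∑ i ∈ Finset.range (k + 1),
      (-1 : ℤ) ^ (i + 1) * ((i : ℤ) + 2) ^ m * (Nat.factorial (i + 1) : ℤ) *
        (stirling2 (k + 1) (i + 1) : ℤ) := by
    rw [F, Finset.sum_range_succ']
    simp [stirling2_succ_zero]
    apply Finset.sum_congr rfl
    intro i _
    push_cast
    ring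
  rw [h0]
  have h1 : ∀ i ∈ Finset.range (k + 1),
      (-1 : ℤ) ^ (i + 1) * ((i : ℤ) + 2) ^ m * (Nat.factorial (i + 1) : ℤ) *
        (stirling2 (k + 1) (i + 1) : ℤ)
      = (-1 : ℤ) ^ i * (Nat.factorial i : ℤ) * (stirling2 k i : ℤ) *
          (-((i : ℤ) + 2) ^ m * ((i : ℤ) + 1))
        + (-1 : ℤ) ^ (i + 1) * ((i : ℤ) + 2) ^ m * (Nat.factorial (i + 1) : ℤ) *
            (((i : ℤ) + 1) * (stirling2 k (i + 1) : ℤ)) := by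
    intro i _
    rw [stirling2_succ_succ]
    push_cast [Nat.factorial_succ]
    ring
  rw [Finset.sum_congr rfl h1, Finset.sum_add_distrib]
  -- second sum: reindex
  have h2 : (∑ i ∈ Finset.range (k + 1),
      (-1 : ℤ) ^ (i + 1) * ((i : ℤ) + 2) ^ m * (Nat.factorial (i + 1) : ℤ) *
        (((i : ℤ) + 1) * (stirling2 k (i + 1) : ℤ)))
      = ∑ i ∈ Finset.range (k + 1),
          (-1 : ℤ) ^ i * ((i : ℤ) + 1) ^ m * (Nat.factorial i : ℤ) *
            ((i : ℤ) * (stirling2 k i : ℤ)) := by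
    have e1 : (∑ i ∈ Finset.range (k + 2),
        (-1 : ℤ) ^ i * ((i : ℤ) + 1) ^ m * (Nat.factorial i : ℤ) *
          ((i : ℤ) * (stirling2 k i : ℤ)))
        = ∑ i ∈ Finset.range (k + 1),
            (-1 : ℤ) ^ (i + 1) * ((i : ℤ) + 2) ^ m * (Nat.factorial (i + 1) : ℤ) *
              (((i : ℤ) + 1) * (stirling2 k (i + 1) : ℤ)) := by
      rw [Finset.sum_range_succ']
      simp only [Nat.cast_zero, zero_mul, mul_zero, add_zero]
      apply Finset.sum_congr rfl
      intro i _
      push_cast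
      ring
    rw [← e1, Finset.sum_range_succ, stirling2_eq_zero k (k + 1) (by omega)]
    push_cast
    ring
  rw [h2, ← Finset.sum_add_distrib]
  apply Finset.sum_congr rfl
  intro i _
  ring

lemma keyR (m k : ℕ) : F (m + 1) k - F m (k + 1) = F m k + G m k := by
  rw [F_succ_right]
  simp only [F, G]
  rw [← Finset.sum_sub_distrib, ← Finset.sum_add_distrib]
  apply Finset.sum_congr rfl
  intro i _
  push_cast [Nat.factorial_succ]
  ring

lemma G_eq_sum (m k : ℕ) :
    G m k = ∑ j ∈ Finset.range (m + 1), (Nat.choose m j : ℤ) * F (j + 1) k := by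
  have h : ∀ i : ℕ, ((i : ℤ) + 2) ^ m
      = ∑ j ∈ Finset.range (m + 1), ((i : ℤ) + 1) ^ j * (Nat.choose m j : ℤ) := by
    intro i
    have := add_pow ((i : ℤ) + 1) 1 m
    simp only [one_pow, mul_one] at this
    rw [show ((i : ℤ) + 2) = ((i : ℤ) + 1) + 1 by ring, this]
  rw [G]
  have h1 : ∀ i ∈ Finset.range (k + 1),
      (-1 : ℤ) ^ i * ((i : ℤ) + 2) ^ m * (Nat.factorial (i + 1) : ℤ) * (stirling2 k i : ℤ)
      = ∑ j ∈ Finset.range (m + 1), (Nat.choose m j : ℤ) *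
          ((-1 : ℤ) ^ i * ((i : ℤ) + 1) ^ (j + 1) * (Nat.factorial i : ℤ) *
            (stirling2 k i : ℤ)) := by
    intro i _
    rw [h i]
    simp only [Finset.mul_sum, Finset.sum_mul]
    apply Finset.sum_congr rfl
    intro j _
    push_cast [Nat.factorial_succ]
    ring
  rw [Finset.sum_congr rfl h1, Finset.sum_comm]
  apply Finset.sum_congr rfl
  intro j _
  rw [F, Finset.mul_sum]

lemma stirling2_succ_int (m i : ℕ) :
    (stirling2 (m + 1) i : ℤ)
      = (if i = 0 then 0 else (stirling2 m (i - 1) : ℤ)) + (i : ℤ) * (stirling2 m i : ℤ) := by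
  match i with
  | 0 => simp [stirling2_succ_zero]
  | i + 1 => rw [stirling2_succ_succ]; push_cast; ring

lemma star (m : ℕ) : ∀ i : ℕ,
    (∑ j ∈ Finset.range (m + 1), (-1 : ℤ) ^ j * (Nat.choose m j : ℤ) * (stirling2 (j + 1) i : ℤ))
    = (-1 : ℤ) ^ m * (if i = 0 then 0 else (stirling2 m (i - 1) : ℤ)) := by
  induction m with
  | zero =>
      intro i
      match i with
      | 0 => simp [stirling2]
      | 1 => simp [stirling2]
      | i + 2 =>
          simp [stirling2_eq_zero 1 (i + 2) (by omega), stirling2_eq_zero 0 (i + 1) (by omega),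
            stirling2]
  | succ m ih =>
      intro i
      match i with
      | 0 => simp [stirling2_succ_zero]
      | i + 1 =>
        rw [Finset.sum_range_succ']
        have h1 : ∀ j ∈ Finset.range (m + 1),
            (-1 : ℤ) ^ (j + 1) * (Nat.choose (m + 1) (j + 1) : ℤ) *
              (stirling2 (j + 2) (i + 1) : ℤ)
            = (-((-1 : ℤ) ^ j * (Nat.choose m j : ℤ) * (stirling2 (j + 1) i : ℤ))
                + -(((i : ℤ) + 1) *
                    ((-1 : ℤ) ^ j * (Nat.choose m j : ℤ) * (stirling2 (j + 1) (i + 1) : ℤ))))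
              + (-1 : ℤ) ^ (j + 1) * (Nat.choose m (j + 1) : ℤ) *
                  (stirling2 (j + 2) (i + 1) : ℤ) := by
          intro j _
          rw [Nat.choose_succ_succ, show stirling2 (j + 2) (i + 1)
              = stirling2 (j + 1) i + (i + 1) * stirling2 (j + 1) (i + 1) from
                stirling2_succ_succ (j + 1) i]
          push_cast
          ring
        rw [Finset.sum_congr rfl h1, Finset.sum_add_distrib, Finset.sum_add_distrib]
        -- the last sum reindexes
        have h2 : (∑ j ∈ Finset.range (m + 1), (-1 : ℤ) ^ (j + 1) * (Nat.choose m (j + 1) : ℤ) *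
              (stirling2 (j + 2) (i + 1) : ℤ))
            = (∑ j ∈ Finset.range (m + 1), (-1 : ℤ) ^ j * (Nat.choose m j : ℤ) *
                (stirling2 (j + 1) (i + 1) : ℤ))
              - (stirling2 1 (i + 1) : ℤ) := by
          have e1 : (∑ j ∈ Finset.range (m + 2), (-1 : ℤ) ^ j * (Nat.choose m j : ℤ) *
                (stirling2 (j + 1) (i + 1) : ℤ))
              = (∑ j ∈ Finset.range (m + 1), (-1 : ℤ) ^ (j + 1) * (Nat.choose m (j + 1) : ℤ) *
                  (stirling2 (j + 2) (i + 1) : ℤ)) + (stirling2 1 (i + 1) : ℤ) := by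
            rw [Finset.sum_range_succ']
            simp
          have e2 : (∑ j ∈ Finset.range (m + 2), (-1 : ℤ) ^ j * (Nat.choose m j : ℤ) *
                (stirling2 (j + 1) (i + 1) : ℤ))
              = ∑ j ∈ Finset.range (m + 1), (-1 : ℤ) ^ j * (Nat.choose m j : ℤ) *
                  (stirling2 (j + 1) (i + 1) : ℤ) := by
            rw [Finset.sum_range_succ, Nat.choose_succ_self]
            simp
          rw [← e2, e1]
          ring
        rw [h2, Finset.sum_neg_distrib, Finset.sum_neg_distrib, ← Finset.mul_sum,
          ih i, ih (i + 1)]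
        simp only [Nat.add_sub_cancel, if_neg (Nat.succ_ne_zero i)]
        rw [show ((-1 : ℤ) ^ (m + 1)) = -(-1) ^ m by ring, stirling2_succ_int]
        simp [Nat.choose_zero_right, stirling2]
        split_ifs <;> ring

lemma U' (m k : ℕ) :
    (-1 : ℤ) ^ m * G k m
      = ∑ j ∈ Finset.range (m + 1),
          (Nat.choose m j : ℤ) * ((-1 : ℤ) ^ (j + 1) * F k (j + 1)) := by
  have hext : ∀ j ∈ Finset.range (m + 1),
      (Nat.choose m j : ℤ) * ((-1 : ℤ) ^ (j + 1) * F k (j + 1))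
      = ∑ i ∈ Finset.range (m + 2), (Nat.choose m j : ℤ) * ((-1 : ℤ) ^ (j + 1) *
          ((-1 : ℤ) ^ i * ((i : ℤ) + 1) ^ k * (Nat.factorial i : ℤ) *
            (stirling2 (j + 1) i : ℤ))) := by
    intro j hj
    simp only [Finset.mem_range] at hj
    have hF : F k (j + 1) = ∑ i ∈ Finset.range (m + 2),
        (-1 : ℤ) ^ i * ((i : ℤ) + 1) ^ k * (Nat.factorial i : ℤ) *
          (stirling2 (j + 1) i : ℤ) := by
      rw [F]
      apply Finset.sum_subset (Finset.range_subset_range.mpr (by omega))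
      intro i _ hi
      simp only [Finset.mem_range, not_lt] at hi
      rw [stirling2_eq_zero (j + 1) i (by omega)]
      simp
    rw [hF, Finset.mul_sum, Finset.mul_sum]
  rw [Finset.sum_congr rfl hext, Finset.sum_comm]
  have hinner : ∀ i ∈ Finset.range (m + 2),
      (∑ j ∈ Finset.range (m + 1), (Nat.choose m j : ℤ) * ((-1 : ℤ) ^ (j + 1) *
          ((-1 : ℤ) ^ i * ((i : ℤ) + 1) ^ k * (Nat.factorial i : ℤ) *
            (stirling2 (j + 1) i : ℤ))))
      = (-1 : ℤ) ^ (i + 1) * ((i : ℤ) + 1) ^ k * (Nat.factorial i : ℤ) *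
          ((-1 : ℤ) ^ m * (if i = 0 then 0 else (stirling2 m (i - 1) : ℤ))) := by
    intro i _
    rw [← star m i, Finset.mul_sum]
    apply Finset.sum_congr rfl
    intro j _
    ring
  rw [Finset.sum_congr rfl hinner, Finset.sum_range_succ']
  norm_num
  rw [G, Finset.mul_sum]
  apply Finset.sum_congr rfl
  intro i _
  push_cast
  ring

lemma F_zero_left : ∀ k, F 0 k = (-1 : ℤ) ^ k := by
  intro k
  induction k with
  | zero => simp [F_zero_right]
  | succ k ih =>
      have h1 := keyR 0 k
      have h2 : G 0 k = F 1 k := by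
        rw [G_eq_sum]; simp
      rw [h2] at h1
      have : F 0 (k + 1) = -F 0 k := by linarith
      rw [this, ih]
      ring

lemma symF : ∀ k m : ℕ, (-1 : ℤ) ^ k * F m k = (-1 : ℤ) ^ m * F k m := by
  intro k
  induction k with
  | zero =>
      intro m
      rw [F_zero_right, F_zero_left]
      simp [← pow_add, ← two_mul]
  | succ k ih =>
      intro m
      have R1 := keyR m k
      have R2 := keyR k m
      have hg : (-1 : ℤ) ^ k * G m k = (-1 : ℤ) ^ m * G k m := by
        rw [U' m k, G_eq_sum, Finset.mul_sum]
        apply Finset.sum_congr rfl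
        intro j _
        have := ih (j + 1)
        calc (-1 : ℤ) ^ k * ((Nat.choose m j : ℤ) * F (j + 1) k)
            = (Nat.choose m j : ℤ) * ((-1 : ℤ) ^ k * F (j + 1) k) := by ring
          _ = (Nat.choose m j : ℤ) * ((-1 : ℤ) ^ (j + 1) * F k (j + 1)) := by rw [this]
      have h1 := ih m
      have h2 := ih (m + 1)
      -- goal : (-1)^(k+1) * F m (k+1) = (-1)^m * F (k+1) m
      have e1 : (-1 : ℤ) ^ (k + 1) * F m (k + 1)
          = (-1 : ℤ) ^ k * F m k + (-1 : ℤ) ^ k * G m k - (-1 : ℤ) ^ k * F (m + 1) k := by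
        rw [pow_succ]
        linear_combination (-(1 : ℤ)) ^ k * R1
      have e2 : (-1 : ℤ) ^ (m + 1) * F k (m + 1)
          = (-1 : ℤ) ^ m * F k m + (-1 : ℤ) ^ m * G k m - (-1 : ℤ) ^ m * F (k + 1) m := by
        rw [pow_succ]
        linear_combination (-(1 : ℤ)) ^ m * R2
      rw [e1, hg, h1, h2, e2]
      ring

end PB


/-- Symmetry of Kaneko's poly-Bernoulli numbers: `B_m^{-k} = B_k^{-m}`, i.e.
`(-1)^k Σ_{i=0}^k (-1)^i (i+1)^m i! S_{k,i} = (-1)^m Σ_{i=0}^m (-1)^i (i+1)^k i! S_{m,i}`. -/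
theorem poly_bernoulli_symmetry (m k : ℕ) :
    (-1 : ℤ) ^ k * (∑ i ∈ Finset.range (k + 1),
        (-1 : ℤ) ^ i * ((i : ℤ) + 1) ^ m * (Nat.factorial i : ℤ) * (stirling2 k i : ℤ)) =
      (-1 : ℤ) ^ m * ∑ i ∈ Finset.range (m + 1),
        (-1 : ℤ) ^ i * ((i : ℤ) + 1) ^ k * (Nat.factorial i : ℤ) * (stirling2 m i : ℤ) :=
  PB.symF k m
end
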